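/- arXiv:2110.14639 — 13 statements merged into one kernel-verified Lean document; each statement's English description precedes it below -/
import Mathlib

section
/- Let R be a commutative ring, S a multiplicatively closed subset of R, M an R-module, and N a submodule of M with (N :_R M) ∩ S = ∅. Then N is a weakly S-prime submodule of M if and only if there exists s ∈ S such that for every ideal I of R and every submodule K of M, if I•K ⊆ N and I•K ≠ 0, then s·I ⊆ (N :_R M) or s•K ⊆ N. -/
/-- A submodule `N` of an `R`-module `M` is *weakly `S`-prime* (for a multiplicatively
closed subset `S ⊆ R`) if `(N :_R M) ∩ S = ∅` and there exists `s ∈ S` such that for all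
`a ∈ R` and `m ∈ M` with `0 ≠ a • m ∈ N`, either `s * a ∈ (N :_R M)` or `s • m ∈ N`. -/
def IsWeaklySPrime {R M : Type*} [CommRing R] [AddCommGroup M] [Module R M]
    (S : Set R) (N : Submodule R M) : Prop :=
  ((N.colon ⊤ : Set R) ∩ S = ∅) ∧
    ∃ s ∈ S, ∀ (a : R) (m : M), a • m ∈ N → a • m ≠ 0 →
      s * a ∈ N.colon ⊤ ∨ s • m ∈ N

theorem stmt0 {R M : Type*} [CommRing R] [Nontrivial R] [AddCommGroup M] [Module R M]
    (S : Set R) (hS : ∀ a ∈ S, ∀ b ∈ S, a * b ∈ S)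
    (N : Submodule R M) (hdisj : (N.colon ⊤ : Set R) ∩ S = ∅) :
    IsWeaklySPrime S N ↔
      ∃ s ∈ S, ∀ (I : Ideal R) (K : Submodule R M),
        I • K ≤ N → I • K ≠ ⊥ →
          (∀ a ∈ I, s * a ∈ N.colon ⊤) ∨ (∀ k ∈ K, s • k ∈ N) := by
  constructor
  · rintro ⟨-, s, hsS, hs⟩
    refine ⟨s, hsS, fun I K hIK hne => ?_⟩
    by_contra hcon
    push_neg at hcon
    obtain ⟨⟨a, haI, ha⟩, ⟨k, hkK, hk⟩⟩ := hcon
    have hNle := Submodule.smul_le.mp hIK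
    have A : ∀ a' ∈ I, ∀ k' ∈ K, s * a' ∉ N.colon ⊤ → s • k' ∉ N → a' • k' = 0 := by
      intro a' ha'I k' hk'K h1 h2
      by_contra h0
      rcases hs a' k' (hNle a' ha'I k' hk'K) h0 with h | h
      exacts [h1 h, h2 h]
    have B : ∀ k' ∈ K, s • k' ∉ N → ∀ a' ∈ I, a' • k' = 0 := by
      intro k' hk'K h2 a' ha'I
      by_contra h0
      have hak' : a • k' = 0 := A a haI k' hk'K ha h2
      have h1 : s * a' ∈ N.colon ⊤ := by
        rcases hs a' k' (hNle a' ha'I k' hk'K) h0 with h | h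
        · exact h
        · exact absurd h h2
      have h3 : s * (a + a') ∈ N.colon ⊤ := by
        have hmem : (a + a') • k' ∈ N := hNle _ (I.add_mem haI ha'I) k' hk'K
        have hne0 : (a + a') • k' ≠ 0 := by
          rwa [add_smul, hak', zero_add]
        rcases hs _ _ hmem hne0 with h | h
        · exact h
        · exact absurd h h2
      have : s * a ∈ N.colon ⊤ := by
        have := (N.colon ⊤).sub_mem h3 h1
        rwa [show s * (a + a') - s * a' = s * a by ring] at this
      exact ha this
    have C : ∀ a' ∈ I, s * a' ∉ N.colon ⊤ → ∀ k' ∈ K, a' • k' = 0 := by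
      intro a' ha'I h1 k' hk'K
      by_contra h0
      have ha'k : a' • k = 0 := A a' ha'I k hkK h1 hk
      have h2 : s • k' ∈ N := by
        rcases hs a' k' (hNle a' ha'I k' hk'K) h0 with h | h
        · exact absurd h h1
        · exact h
      have h3 : s • (k + k') ∈ N := by
        have hmem : a' • (k + k') ∈ N := hNle a' ha'I _ (K.add_mem hkK hk'K)
        have hne0 : a' • (k + k') ≠ 0 := by
          rwa [smul_add, ha'k, zero_add]
        rcases hs _ _ hmem hne0 with h | h
        · exact absurd h h1
        · exact h
      have : s • k ∈ N := by
        have := N.sub_mem h3 h2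
        rwa [show s • (k + k') - s • k' = s • k by rw [smul_add]; abel] at this
      exact hk this
    apply hne
    rw [eq_bot_iff]
    refine Submodule.smul_le.mpr fun a' ha'I k' hk'K => ?_
    rw [Submodule.mem_bot]
    by_cases h1 : s * a' ∈ N.colon ⊤
    · by_cases h2 : s • k' ∈ N
      · have hak : a • k = 0 := A a haI k hkK ha hk
        have hak' : a • k' = 0 := C a haI ha k' hk'K
        have ha'k : a' • k = 0 := B k hkK hk a' ha'I
        by_contra h0
        have key : (a + a') • (k + k') = a' • k' := by
          rw [add_smul, smul_add, smul_add, hak, hak', ha'k]; abel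
        have hmem : (a + a') • (k + k') ∈ N :=
          hNle _ (I.add_mem haI ha'I) _ (K.add_mem hkK hk'K)
        have hne0 : (a + a') • (k + k') ≠ 0 := by rwa [key]
        rcases hs _ _ hmem hne0 with h | h
        · apply ha
          have := (N.colon ⊤).sub_mem h h1
          rwa [show s * (a + a') - s * a' = s * a by ring] at this
        · apply hk
          have := N.sub_mem h h2
          rwa [show s • (k + k') - s • k' = s • k by rw [smul_add]; abel] at this
      · exact B k' hk'K h2 a' ha'I
    · exact C a' ha'I h1 k' hk'K
  · rintro ⟨s, hsS, hs⟩
    refine ⟨hdisj, s, hsS, fun a m ham hne => ?_⟩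
    have hIK : Ideal.span {a} • Submodule.span R {m} ≤ N := by
      refine Submodule.smul_le.mpr fun r hr n hn => ?_
      obtain ⟨c, rfl⟩ := Ideal.mem_span_singleton'.mp hr
      obtain ⟨d, rfl⟩ := Submodule.mem_span_singleton.mp hn
      have h : (c * a) • d • m = (c * d) • (a • m) := by
        rw [smul_smul, smul_smul]; ring_nf
      rw [h]
      exact N.smul_mem _ ham
    have hne' : Ideal.span {a} • Submodule.span R {m} ≠ ⊥ := by
      intro h
      apply hne
      have hmem : a • m ∈ Ideal.span {a} • Submodule.span R {m} :=
        Submodule.smul_mem_smul (Ideal.subset_span rfl) (Submodule.subset_span rfl)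
      rw [h, Submodule.mem_bot] at hmem
      exact hmem
    rcases hs _ _ hIK hne' with h | h
    · exact Or.inl (h a (Ideal.subset_span rfl))
    · exact Or.inr (h m (Submodule.subset_span rfl))
end

section
/- Let R be a commutative ring, S a multiplicatively closed subset of R, and M an R-module. If N is a weakly S-prime submodule of M, then for every submodule K of M with (N :_R K) ∩ S = ∅ and Ann_R(K) = 0, the ideal (N :_R K) is a weakly S-prime ideal of R. In particular, if M is faithful, then (N :_R M) is a weakly S-prime ideal of R. -/
/-- An ideal `I` of `R` with `I ∩ S = ∅` is a *weakly `S`-prime ideal* if there exists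
`s ∈ S` such that for all `a, b ∈ R` with `0 ≠ a * b ∈ I`, either `s * a ∈ I` or `s * b ∈ I`. -/
def IsWeaklySPrimeIdeal {R : Type*} [CommRing R] (S : Set R) (I : Ideal R) : Prop :=
  ((I : Set R) ∩ S = ∅) ∧
    ∃ s ∈ S, ∀ a b : R, a * b ∈ I → a * b ≠ 0 → s * a ∈ I ∨ s * b ∈ I

theorem stmt2 {R M : Type*} [CommRing R] [Nontrivial R] [AddCommGroup M] [Module R M]
    (S : Set R) (hS : ∀ a ∈ S, ∀ b ∈ S, a * b ∈ S)
    (N : Submodule R M) (hN : IsWeaklySPrime S N) :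
    (∀ K : Submodule R M, ((N.colon K : Set R) ∩ S = ∅) → K.annihilator = ⊥ →
        IsWeaklySPrimeIdeal S (N.colon K)) ∧
      ((∀ r : R, (∀ m : M, r • m = 0) → r = 0) → IsWeaklySPrimeIdeal S (N.colon ⊤)) := by
  obtain ⟨hdisj, s, hsS, hs⟩ := hN
  have main : ∀ K : Submodule R M, ((N.colon K : Set R) ∩ S = ∅) → K.annihilator = ⊥ →
      IsWeaklySPrimeIdeal S (N.colon K) := by
    intro K hK hann
    refine ⟨hK, s, hsS, ?_⟩
    intro a b hab hab0
    by_contra hcon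
    push_neg at hcon
    obtain ⟨ha, hb⟩ := hcon
    -- helper: s * a ∈ N.colon ⊤ contradicts ha
    have haT : s * a ∉ N.colon (⊤ : Submodule R M) := by
      intro h
      exact ha (Submodule.mem_colon.mpr fun p hp =>
        Submodule.mem_colon.mp h p trivial)
    -- there is k0 ∈ K with (s*b) • k0 ∉ N
    rw [Submodule.mem_colon] at hb
    push_neg at hb
    obtain ⟨k0, hk0K, hk0⟩ := hb
    have hk00 : (a * b) • k0 = 0 := by
      by_contra hne
      have h1 : a • (b • k0) ∈ N := by
        rw [← mul_smul]; exact Submodule.mem_colon.mp hab k0 hk0K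
      have h1ne : a • (b • k0) ≠ 0 := by rwa [← mul_smul]
      rcases hs a (b • k0) h1 h1ne with h2 | h2
      · exact haT h2
      · rw [← mul_smul] at h2; exact hk0 h2
    have key : ∀ k ∈ K, (a * b) • k = 0 := by
      intro k hkK
      by_contra hne
      have h1 : a • (b • k) ∈ N := by
        rw [← mul_smul]; exact Submodule.mem_colon.mp hab k hkK
      have h1ne : a • (b • k) ≠ 0 := by rwa [← mul_smul]
      have hsbk : (s * b) • k ∈ N := by
        rcases hs a (b • k) h1 h1ne with h2 | h2
        · exact absurd h2 haT
        · rwa [← mul_smul] at h2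
      have hkk0 : k + k0 ∈ K := K.add_mem hkK hk0K
      have h3 : a • (b • (k + k0)) ∈ N := by
        rw [← mul_smul]; exact Submodule.mem_colon.mp hab _ hkk0
      have h3ne : a • (b • (k + k0)) ≠ 0 := by
        rw [← mul_smul, smul_add, hk00, add_zero]; exact hne
      have hsbkk0 : (s * b) • (k + k0) ∈ N := by
        rcases hs a (b • (k + k0)) h3 h3ne with h2 | h2
        · exact absurd h2 haT
        · rwa [← mul_smul] at h2
      apply hk0
      have : (s * b) • k0 = (s * b) • (k + k0) - (s * b) • k := by
        rw [smul_add]; abel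
      rw [this]
      exact N.sub_mem hsbkk0 hsbk
    have : a * b ∈ K.annihilator := Submodule.mem_annihilator.mpr key
    rw [hann, Submodule.mem_bot] at this
    exact hab0 this
  refine ⟨main, fun hf => main ⊤ hdisj ?_⟩
  rw [eq_bot_iff]
  intro r hr
  rw [Submodule.mem_bot]
  exact hf r fun m => Submodule.mem_annihilator.mp hr m trivial
end

section
/- Let R be a commutative ring, S a multiplicatively closed subset of R, M a multiplication R-module, and N a submodule of M. If (N :_R M) is a weakly S-prime ideal of R, then N is a weakly S-prime submodule of M. -/
theorem stmt3 {R M : Type*} [CommRing R] [Nontrivial R] [AddCommGroup M] [Module R M]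
    (S : Set R) (hS : ∀ a ∈ S, ∀ b ∈ S, a * b ∈ S)
    (hmult : ∀ P : Submodule R M, ∃ I : Ideal R, P = I • (⊤ : Submodule R M))
    (N : Submodule R M) (h : IsWeaklySPrimeIdeal S (N.colon ⊤)) :
    IsWeaklySPrime S N := by
  obtain ⟨hdisj, s, hsS, hs⟩ := h
  refine ⟨hdisj, s, hsS, ?_⟩
  intro a m hm hne
  obtain ⟨I, hI⟩ := hmult (Submodule.span R {m})
  have hmI : m ∈ I • (⊤ : Submodule R M) := by
    rw [← hI]; exact Submodule.mem_span_singleton_self m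
  -- a * b ∈ (N : M) for all b ∈ I
  have hab_mem : ∀ b ∈ I, a * b ∈ N.colon ⊤ := by
    intro b hb
    rw [Submodule.mem_colon]
    intro x _
    have hbx : b • x ∈ Submodule.span R {m} := by
      rw [hI]; exact Submodule.smul_mem_smul hb trivial
    obtain ⟨r, hr⟩ := Submodule.mem_span_singleton.mp hbx
    have : (a * b) • x = r • (a • m) := by
      rw [mul_smul, ← hr, smul_comm a r]
    rw [this]
    exact N.smul_mem r hm
  -- some b₀ ∈ I with a * b₀ ≠ 0
  have hb0 : ∃ b₀ ∈ I, a * b₀ ≠ 0 := by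
    by_contra hc
    push_neg at hc
    apply hne
    refine Submodule.smul_induction_on hmI ?_ ?_
    · intro b hb t _
      rw [smul_smul, hc b hb, zero_smul]
    · intro x y hx hy
      rw [smul_add, hx, hy, add_zero]
  obtain ⟨b₀, hb₀I, hb₀ne⟩ := hb0
  by_cases hsa : s * a ∈ N.colon ⊤
  · exact Or.inl hsa
  right
  have hsb : ∀ b ∈ I, s * b ∈ N.colon ⊤ := by
    intro b hb
    by_cases hab : a * b = 0
    · have h1 : a * (b + b₀) ≠ 0 := by
        rw [mul_add, hab, zero_add]; exact hb₀ne
      have h2 : s * (b + b₀) ∈ N.colon ⊤ :=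
        (hs a (b + b₀) (hab_mem _ (I.add_mem hb hb₀I)) h1).resolve_left hsa
      have h3 : s * b₀ ∈ N.colon ⊤ :=
        (hs a b₀ (hab_mem _ hb₀I) hb₀ne).resolve_left hsa
      have heq : s * b = s * (b + b₀) - s * b₀ := by ring
      rw [heq]
      exact Submodule.sub_mem _ h2 h3
    · exact (hs a b (hab_mem b hb) hab).resolve_left hsa
  refine Submodule.smul_induction_on hmI ?_ ?_
  · intro b hb t _
    rw [smul_smul]
    exact Submodule.mem_colon.mp (hsb b hb) t trivial
  · intro x y hx hy
    rw [smul_add]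
    exact N.add_mem hx hy
end

section
/- Let R be a commutative ring, S a multiplicatively closed subset of R, M an R-module, and N a weakly S-prime submodule of M. If A is a subset of R such that (0 :_M A) = 0 and Z_{(N :_R M)}(R) ∩ A = ∅, then (N :_M A) is a weakly S-prime submodule of M. -/
/-- The residual `(N :_M A) = {m ∈ M : a • m ∈ N for all a ∈ A}` of a submodule `N`
by a subset `A ⊆ R`. -/
def colonSet {R M : Type*} [CommRing R] [AddCommGroup M] [Module R M]
    (N : Submodule R M) (A : Set R) : Submodule R M where
  carrier := {m : M | ∀ a ∈ A, a • m ∈ N}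
  zero_mem' := by
    intro a _
    simp
  add_mem' := by
    intro x y hx hy a ha
    rw [smul_add]
    exact N.add_mem (hx a ha) (hy a ha)
  smul_mem' := by
    intro c x hx a ha
    rw [smul_comm]
    exact N.smul_mem c (hx a ha)

lemma mem_colonSet {R M : Type*} [CommRing R] [AddCommGroup M] [Module R M]
    {N : Submodule R M} {A : Set R} {m : M} :
    m ∈ colonSet N A ↔ ∀ a ∈ A, a • m ∈ N := Iff.rfl

theorem stmt4 {R M : Type*} [CommRing R] [Nontrivial R] [AddCommGroup M] [Module R M]
    (S : Set R) (hS : ∀ a ∈ S, ∀ b ∈ S, a * b ∈ S)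
    (N : Submodule R M) (hN : IsWeaklySPrime S N) (A : Set R)
    (hA0 : ∀ m : M, (∀ a ∈ A, a • m = 0) → m = 0)
    (hAZ : {r : R | ∃ a : R, a ∉ N.colon ⊤ ∧ r * a ∈ N.colon ⊤} ∩ A = ∅) :
    IsWeaklySPrime S (colonSet N A) := by
  obtain ⟨hdisj, s, hsS, hs⟩ := hN
  -- A is nonempty, since otherwise M is trivial and the first condition on N fails
  have hAne : A.Nonempty := by
    by_contra h
    rw [Set.not_nonempty_iff_eq_empty] at h
    subst h
    have hM : ∀ m : M, m = 0 := fun m => hA0 m (by simp)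
    have hmem : s ∈ ((N.colon ⊤ : Submodule R R) : Set R) ∩ S := by
      refine ⟨Submodule.mem_colon.mpr (fun p _ => ?_), hsS⟩
      rw [hM (s • p)]; exact N.zero_mem
    rw [hdisj] at hmem
    exact hmem.elim
  -- ((N :_M A) : M) ⊤ ⊆ (N : M) ⊤
  have hsub : ∀ r : R, r ∈ (colonSet N A).colon ⊤ → r ∈ N.colon ⊤ := by
    intro r hr
    by_contra hrN
    obtain ⟨b, hb⟩ := hAne
    have hmem : b ∈ {r : R | ∃ a : R, a ∉ N.colon ⊤ ∧ r * a ∈ N.colon ⊤} ∩ A := by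
      refine ⟨⟨r, hrN, ?_⟩, hb⟩
      rw [Submodule.mem_colon]
      intro p _
      have h1 : r • p ∈ colonSet N A := Submodule.mem_colon.mp hr p trivial
      have h2 := mem_colonSet.mp h1 b hb
      rwa [mul_smul]
    rw [hAZ] at hmem
    exact hmem.elim
  -- N ⊆ colonSet N A
  have hNsub : ∀ x ∈ N, x ∈ colonSet N A := fun x hx =>
    mem_colonSet.mpr fun c _ => N.smul_mem c hx
  constructor
  · rw [Set.eq_empty_iff_forall_notMem]
    rintro x ⟨hx1, hx2⟩
    have : x ∈ ((N.colon ⊤ : Submodule R R) : Set R) ∩ S := ⟨hsub x hx1, hx2⟩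
    rw [hdisj] at this
    exact this.elim
  · refine ⟨s, hsS, ?_⟩
    intro a m ham hne
    by_cases hsa : s * a ∈ N.colon ⊤
    · left
      rw [Submodule.mem_colon]
      intro p _
      exact hNsub _ (Submodule.mem_colon.mp hsa p trivial)
    · right
      have hex : ∃ b0 ∈ A, b0 • (a • m) ≠ 0 := by
        by_contra h
        push_neg at h
        exact hne (hA0 _ h)
      obtain ⟨b0, hb0A, hb0⟩ := hex
      have hamA := mem_colonSet.mp ham
      -- step with b0 directly
      have hb0N : s • (b0 • m) ∈ N := by
        rcases hs a (b0 • m) (by rw [smul_comm]; exact hamA b0 hb0A)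
            (by rw [smul_comm]; exact hb0) with h | h
        · exact absurd h hsa
        · exact h
      refine mem_colonSet.mpr fun b hbA => ?_
      have goal_eq : b • (s • m) = s • (b • m) := smul_comm b s m
      rw [goal_eq]
      by_cases hbz : b • (a • m) = 0
      · -- use b + b0
        have h1 : a • ((b + b0) • m) ∈ N := by
          rw [add_smul, smul_add, smul_comm a b, smul_comm a b0]
          exact N.add_mem (hamA b hbA) (hamA b0 hb0A)
        have h2 : a • ((b + b0) • m) ≠ 0 := by
          rw [add_smul, smul_add, smul_comm a b, smul_comm a b0, hbz, zero_add]
          exact hb0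
        rcases hs a ((b + b0) • m) h1 h2 with h | h
        · exact absurd h hsa
        · have h3 : s • ((b + b0) • m) = s • (b • m) + s • (b0 • m) := by
            rw [add_smul, smul_add]
          rw [h3] at h
          have := N.sub_mem h hb0N
          simpa using this
      · rcases hs a (b • m) (by rw [smul_comm]; exact hamA b hbA)
            (by rw [smul_comm]; exact hbz) with h | h
        · exact absurd h hsa
        · exact h
end

section
/- Let R be a commutative ring, S a multiplicatively closed subset of R, M an R-module, and N a submodule of M such that Z_{(N :_R M)}(R) ∪ Z(M) ⊆ (N :_R M). If N is a maximal weakly S-prime submodule of M (i.e., N is weakly S-prime and no weakly S-prime submodule of M properly contains N), then N is an S-prime submodule of M. -/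
/-- A submodule `N` of an `R`-module `M` is *`S`-prime* if `(N :_R M) ∩ S = ∅` and there
exists `s ∈ S` such that for all `a ∈ R` and `m ∈ M` with `a • m ∈ N`, either
`s * a ∈ (N :_R M)` or `s • m ∈ N`. -/
def IsSPrime {R M : Type*} [CommRing R] [AddCommGroup M] [Module R M]
    (S : Set R) (N : Submodule R M) : Prop :=
  ((N.colon ⊤ : Set R) ∩ S = ∅) ∧
    ∃ s ∈ S, ∀ (a : R) (m : M), a • m ∈ N →
      s * a ∈ N.colon ⊤ ∨ s • m ∈ N

theorem stmt5 {R M : Type*} [CommRing R] [Nontrivial R] [AddCommGroup M] [Module R M]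
    (S : Set R) (hS : ∀ a ∈ S, ∀ b ∈ S, a * b ∈ S)
    (N : Submodule R M)
    (hZ : ({r : R | ∃ a : R, a ∉ N.colon ⊤ ∧ r * a ∈ N.colon ⊤} ∪
        {r : R | ∃ m : M, m ≠ 0 ∧ r • m = 0}) ⊆ (N.colon ⊤ : Set R))
    (hNwp : IsWeaklySPrime S N)
    (hmax : ∀ K : Submodule R M, IsWeaklySPrime S K → ¬ N < K) :
    IsSPrime S N := by
  obtain ⟨hdisj, s, hsS, hs⟩ := hNwp
  refine ⟨hdisj, s, hsS, fun a m hm => ?_⟩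
  by_cases h0 : a • m = 0
  · by_cases hm0 : m = 0
    · right; simp [hm0]
    · left
      have ha : a ∈ (N.colon ⊤ : Set R) := hZ (Or.inr ⟨m, hm0, h0⟩)
      exact Ideal.mul_mem_left _ s ha
  · exact hs a m hm h0
end

section
/- Let R be a commutative ring, S a multiplicatively closed subset of R, I a finitely generated faithful multiplication ideal of R, and N a submodule of a finitely generated faithful multiplication R-module M. If I•N is a weakly S-prime submodule of M and (N :_R M) ∩ S = ∅, then either I is a weakly S-prime ideal of R or N is a weakly S-prime submodule of M. -/
section Aux

variable {R : Type*} {M : Type*} [CommRing R] [AddCommGroup M] [Module R M]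

/-- An ideal contained in the union of two ideals is contained in one of them. -/
lemma aux_cover2 {I A B : Ideal R} (h : ∀ x ∈ I, x ∈ A ∨ x ∈ B) : I ≤ A ∨ I ≤ B := by
  by_contra hc
  push_neg at hc
  obtain ⟨h1, h2⟩ := hc
  rw [SetLike.not_le_iff_exists] at h1 h2
  obtain ⟨x, hxI, hxA⟩ := h1
  obtain ⟨y, hyI, hyB⟩ := h2
  have hxB : x ∈ B := (h x hxI).resolve_left hxA
  have hyA : y ∈ A := (h y hyI).resolve_right hyB
  rcases h (x + y) (I.add_mem hxI hyI) with hA | hB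
  · exact hxA (by simpa using A.sub_mem hA hyA)
  · exact hyB (by simpa using B.sub_mem hB hxB)

/-- Cancellation for finitely generated faithful multiplication submodules:
if `a • P ⊆ B • P` then `a ∈ B`. -/
lemma aux_cancel (P : Submodule R M) (hfg : P.FG)
    (hfaith : ∀ r : R, (∀ p ∈ P, r • p = 0) → r = 0)
    (hmult : ∀ Q : Submodule R M, Q ≤ P → ∃ K : Ideal R, Q = K • P)
    (B : Ideal R) (a : R) (h : ∀ p ∈ P, a • p ∈ B • P) : a ∈ B := by
  set B' : Ideal R := B.colon (Ideal.span {a}) with hB'def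
  have key : P ≤ B'.radical • P := by
    intro p hp
    obtain ⟨K, hK⟩ := hmult (Submodule.span R {p})
      ((Submodule.span_le).2 (Set.singleton_subset_iff.2 hp))
    have hKrad : K ≤ B'.radical := by
      intro c hc
      have hcP : ∀ q ∈ P, c • q ∈ Submodule.span R {p} := fun q hq => by
        rw [hK]; exact Submodule.smul_mem_smul hc hq
      have h1 : ∀ x ∈ B • P, c • x ∈ B • Submodule.span R {p} := by
        intro x hx
        refine Submodule.smul_induction_on hx ?_ ?_
        · intro r hr n hn
          rw [smul_comm c r n]
          exact Submodule.smul_mem_smul hr (hcP n hn)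
        · intro x y hx hy
          rw [smul_add]; exact Submodule.add_mem _ hx hy
      have h2 : ∀ x ∈ B • Submodule.span R {p}, ∃ b ∈ B, x = b • p := by
        intro x hx
        refine Submodule.smul_induction_on hx ?_ ?_
        · intro r hr n hn
          obtain ⟨u, hu⟩ := Submodule.mem_span_singleton.1 hn
          exact ⟨r * u, Ideal.mul_mem_right _ _ hr, by rw [← hu, smul_smul]⟩
        · rintro x y ⟨b1, hb1, rfl⟩ ⟨b2, hb2, rfl⟩
          exact ⟨b1 + b2, B.add_mem hb1 hb2, (add_smul b1 b2 p).symm⟩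
      obtain ⟨b, hbB, hbp⟩ := h2 _ (h1 _ (h p hp))
      have hd : (c * a - b) • p = 0 := by
        rw [sub_smul, mul_smul, ← hbp, sub_self]
      have hdc : (c * a - b) * c = 0 := by
        refine hfaith _ (fun q hq => ?_)
        obtain ⟨u, hu⟩ := Submodule.mem_span_singleton.1 (hcP q hq)
        calc ((c * a - b) * c) • q = (c * a - b) • (c • q) := by rw [mul_smul]
          _ = (c * a - b) • (u • p) := by rw [hu]
          _ = u • ((c * a - b) • p) := smul_comm _ _ _
          _ = 0 := by rw [hd, smul_zero]
      have hc2 : c ^ 2 * a ∈ B := by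
        have heq : c ^ 2 * a = c * b + (c * a - b) * c := by ring
        rw [heq, hdc, add_zero]
        exact Ideal.mul_mem_left _ _ hbB
      have hc2' : c ^ 2 ∈ B' := by
        rw [hB'def, Submodule.mem_colon]
        intro x hx
        obtain ⟨u, hu⟩ := Ideal.mem_span_singleton'.1 hx
        have heq : c ^ 2 • x = u * (c ^ 2 * a) := by
          rw [← hu, smul_eq_mul]; ring
        rw [heq]
        exact Ideal.mul_mem_left _ _ hc2
      exact Ideal.mem_radical_of_pow_mem (Ideal.le_radical hc2')
    have hpmem : p ∈ K • P := by
      rw [← hK]; exact Submodule.mem_span_singleton_self p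
    exact Submodule.smul_mono_left hKrad hpmem
  obtain ⟨r, hr1, hr0⟩ :=
    Submodule.exists_sub_one_mem_and_smul_eq_zero_of_fg_of_le_smul B'.radical P hfg key
  have hr : r = 0 := hfaith r hr0
  have h1rad : (1 : R) ∈ B'.radical := by
    have hneg := B'.radical.neg_mem hr1
    rwa [hr, zero_sub, neg_neg] at hneg
  have hB'top : B' = ⊤ := Ideal.radical_eq_top.1 ((Ideal.eq_top_iff_one _).2 h1rad)
  have h1 : (1 : R) ∈ B' := hB'top ▸ Submodule.mem_top
  have := Submodule.mem_colon.1 (hB'def ▸ h1) a (Ideal.mem_span_singleton_self a)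
  simpa using this

end Aux

theorem stmt7 {R M : Type*} [CommRing R] [Nontrivial R] [AddCommGroup M] [Module R M]
    (S : Set R) (hS : ∀ a ∈ S, ∀ b ∈ S, a * b ∈ S)
    -- `I` is a finitely generated faithful multiplication ideal of `R`
    (I : Ideal R) (hIfg : I.FG)
    (hIfaithful : ∀ r : R, (∀ a ∈ I, r * a = 0) → r = 0)
    (hImult : ∀ J : Ideal R, J ≤ I → ∃ K : Ideal R, J = K * I)
    -- `M` is a finitely generated faithful multiplication `R`-module
    (hMfg : (⊤ : Submodule R M).FG)
    (hMfaithful : ∀ r : R, (∀ m : M, r • m = 0) → r = 0)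
    (hMmult : ∀ P : Submodule R M, ∃ J : Ideal R, P = J • (⊤ : Submodule R M))
    (N : Submodule R M)
    (hIN : IsWeaklySPrime S (I • N))
    (hdisj : (N.colon ⊤ : Set R) ∩ S = ∅) :
    IsWeaklySPrimeIdeal S I ∨ IsWeaklySPrime S N := by
  right
  obtain ⟨hINdisj, s, hsS, hs⟩ := hIN
  refine ⟨hdisj, s, hsS, ?_⟩
  intro a m ham hne
  set J : Ideal R := N.colon ⊤ with hJdef
  -- `N = J • ⊤`
  have hNJ : N = J • (⊤ : Submodule R M) := by
    obtain ⟨J₀, hJ₀⟩ := hMmult N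
    have hJ₀le : J₀ ≤ J := by
      intro x hx
      rw [hJdef, Submodule.mem_colon]
      intro q hq
      rw [hJ₀]
      exact Submodule.smul_mem_smul hx hq
    refine le_antisymm ?_ ?_
    · rw [hJ₀]
      exact Submodule.smul_mono_left hJ₀le
    · exact Submodule.smul_le.2 fun (r : R) (hr : r ∈ J) (n : M) _ => Submodule.mem_colon.1 hr n trivial
  have hIN_eq : I • N = (I * J) • (⊤ : Submodule R M) := by
    rw [hNJ, ← Submodule.smul_assoc, Ideal.smul_eq_mul]
  -- cancellation for `M`
  have cancelM : ∀ (B : Ideal R) (r : R),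
      (∀ q : M, r • q ∈ B • (⊤ : Submodule R M)) → r ∈ B := by
    intro B r hr
    exact aux_cancel ⊤ hMfg (fun r' h' => hMfaithful r' (fun q => h' q Submodule.mem_top))
      (fun Q _ => hMmult Q) B r (fun q _ => hr q)
  -- cancellation for `I`
  have cancelI : ∀ (B : Ideal R) (r : R), (∀ x ∈ I, x * r ∈ B * I) → r ∈ B := by
    intro B r hr
    refine aux_cancel (M := R) I hIfg ?_ ?_ B r ?_
    · intro r' h'
      exact hIfaithful r' fun x hx => by simpa [smul_eq_mul] using h' x hx
    · intro Q hQ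
      obtain ⟨K, hK⟩ := hImult Q hQ
      exact ⟨K, by rw [hK, Ideal.smul_eq_mul]⟩
    · intro p hp
      rw [Ideal.smul_eq_mul, smul_eq_mul, mul_comm r p]
      exact hr p hp
  have step : ∀ t ∈ I, t • (a • m) = 0 ∨
      s * (t * a) ∈ (I • N).colon ⊤ ∨ s • m ∈ I • N := by
    intro t ht
    by_cases h0 : t • (a • m) = 0
    · exact Or.inl h0
    · right
      have hmem : (t * a) • m ∈ I • N := by
        rw [mul_smul]
        exact Submodule.smul_mem_smul ht ham
      exact hs (t * a) m hmem (by rwa [mul_smul])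
  by_cases hsm : s • m ∈ I • N
  · exact Or.inr ((Submodule.smul_le.2 fun r _ n hn => N.smul_mem r hn) hsm)
  · left
    have hcov : ∀ t ∈ I, t ∈ (Submodule.span R {a • m}).annihilator ∨
        t ∈ (I * J).colon (Ideal.span {s * a}) := by
      intro t ht
      rcases step t ht with h0 | h1 | h2
      · exact Or.inl ((Submodule.mem_annihilator_span_singleton _ _).2 h0)
      · right
        have hIJ : s * (t * a) ∈ I * J := by
          apply cancelM
          intro q
          have hq := Submodule.mem_colon.1 h1 q trivial
          rwa [hIN_eq] at hq
        rw [Submodule.mem_colon]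
        intro x hx
        obtain ⟨u, hu⟩ := Ideal.mem_span_singleton'.1 hx
        have heq : t • x = u * (s * (t * a)) := by
          rw [← hu, smul_eq_mul]; ring
        rw [heq]
        exact Ideal.mul_mem_left _ _ hIJ
      · exact absurd h2 hsm
    rcases aux_cover2 hcov with hann | hcol
    · -- impossible: `I` would annihilate the nonzero element `a • m`
      exfalso
      obtain ⟨K, hK⟩ := hMmult (Submodule.span R {a • m})
      have hK0 : ∀ k ∈ K, k = 0 := by
        intro k hk
        apply hIfaithful
        intro x hx
        apply hMfaithful
        intro q
        have hkq : k • q ∈ Submodule.span R {a • m} := by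
          rw [hK]; exact Submodule.smul_mem_smul hk Submodule.mem_top
        obtain ⟨u, hu⟩ := Submodule.mem_span_singleton.1 hkq
        have hx0 : x • (a • m) = 0 :=
          (Submodule.mem_annihilator_span_singleton _ _).1 (hann hx)
        calc (k * x) • q = x • (k • q) := by rw [mul_comm, mul_smul]
          _ = x • (u • (a • m)) := by rw [hu]
          _ = u • (x • (a • m)) := smul_comm _ _ _
          _ = 0 := by rw [hx0, smul_zero]
      have hKbot : K = ⊥ := (Submodule.eq_bot_iff _).2 hK0
      have hspan : Submodule.span R {a • m} = ⊥ := by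
        rw [hK, hKbot, Submodule.bot_smul]
      exact hne (Submodule.span_singleton_eq_bot.1 hspan)
    · have hsa : s * a ∈ J := by
        apply cancelI J (s * a)
        intro x hx
        have hmem := Submodule.mem_colon.1 (hcol hx) (s * a) (Ideal.mem_span_singleton_self _)
        rwa [smul_eq_mul, mul_comm I J] at hmem
      exact hsa
end

section
/- Let R be a commutative ring, S a multiplicatively closed subset of R, I a finitely generated faithful multiplication ideal of R, and N a submodule of a finitely generated faithful multiplication R-module M with N ⊆ I•M. Then N is a weakly S-prime submodule of the R-module I•M if and only if (N :_M I) is a weakly S-prime submodule of M. -/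
/-- The residual `(N :_M I) = {m ∈ M : a • m ∈ N for all a ∈ I}` of a submodule `N`
by an ideal `I` of `R`, as a submodule of `M`. -/
def colonIdeal {R M : Type*} [CommRing R] [AddCommGroup M] [Module R M]
    (N : Submodule R M) (I : Ideal R) : Submodule R M where
  carrier := {m : M | ∀ a ∈ I, a • m ∈ N}
  zero_mem' := by
    intro a _
    simp
  add_mem' := by
    intro x y hx hy a ha
    rw [smul_add]
    exact N.add_mem (hx a ha) (hy a ha)
  smul_mem' := by
    intro c x hx a ha
    rw [smul_comm]
    exact N.smul_mem c (hx a ha)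

/-- `N`, a submodule of `I•M`, is a weakly `S`-prime submodule of the `R`-module `I•M`:
`(N :_R I•M) ∩ S = ∅` and there is `s ∈ S` such that whenever `0 ≠ a • m ∈ N` with
`a ∈ R` and `m ∈ I•M`, then `s * a ∈ (N :_R I•M)` or `s • m ∈ N`. -/
def IsWeaklySPrimeIn {R M : Type*} [CommRing R] [AddCommGroup M] [Module R M]
    (S : Set R) (N : Submodule R M) (I : Ideal R) : Prop :=
  ((N.colon ((I • (⊤ : Submodule R M) : Submodule R M) : Set M) : Set R) ∩ S = ∅) ∧
    ∃ s ∈ S, ∀ (a : R), ∀ m ∈ I • (⊤ : Submodule R M), a • m ∈ N → a • m ≠ 0 →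
      s * a ∈ N.colon ((I • (⊤ : Submodule R M) : Submodule R M) : Set M) ∨ s • m ∈ N

section AuxLemmas

variable {R : Type*} [CommRing R] {M : Type*} [AddCommGroup M] [Module R M]

private lemma sq_span {ι : Type*} (F : Finset ι) (t : ι → R) (h1 : ∑ i ∈ F, t i = 1)
    {M' : Type*} [AddCommGroup M'] [Module R M'] {x : M'} {Q : Submodule R M'}
    (h : ∀ i ∈ F, (t i * t i) • x ∈ Q) : x ∈ Q := by
  classical
  set J : Ideal R := Ideal.span ((F.image fun i => t i * t i : Finset R) : Set R) with hJ
  have hmem : ∀ i ∈ F, t i * t i ∈ J := fun i hi =>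
    Ideal.subset_span (Finset.mem_coe.2 (Finset.mem_image_of_mem _ hi))
  have h1J : (1 : R) ∈ J := by
    have hrad : (1 : R) ∈ J.radical := by
      rw [← h1]
      exact Ideal.sum_mem _ fun i hi =>
        Ideal.mem_radical_iff.2 ⟨2, by rw [pow_two]; exact hmem i hi⟩
    obtain ⟨n, hn⟩ := Ideal.mem_radical_iff.1 hrad
    simpa using hn
  rw [hJ, Ideal.span, Submodule.mem_span_finset] at h1J
  obtain ⟨f, -, hf⟩ := h1J
  have hx : x = ∑ y ∈ F.image (fun i => t i * t i), f y • (y • x) := by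
    conv_lhs => rw [← one_smul R x, ← hf]
    rw [Finset.sum_smul]
    exact Finset.sum_congr rfl fun y _ => smul_assoc (f y) y x
  rw [hx]
  refine Submodule.sum_mem _ fun y hy => ?_
  obtain ⟨i, hi, rfl⟩ := Finset.mem_image.1 hy
  exact Q.smul_mem _ (h i hi)

private lemma smul_shift (I : Ideal R) (t aa : R)
    (hc : ∀ b ∈ I, ∃ c, t * b = c * aa) (B : Submodule R M) :
    ∀ y ∈ I • B, ∃ w ∈ B, t • y = aa • w := by
  intro y hy
  refine Submodule.smul_induction_on hy ?_ ?_
  · intro b hb v hv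
    obtain ⟨c, hcc⟩ := hc b hb
    refine ⟨c • v, B.smul_mem _ hv, ?_⟩
    rw [smul_smul, hcc, mul_comm, mul_smul]
  · rintro y z ⟨w₁, hw₁, e₁⟩ ⟨w₂, hw₂, e₂⟩
    exact ⟨w₁ + w₂, B.add_mem hw₁ hw₂, by rw [smul_add, e₁, e₂, ← smul_add]⟩

private lemma thetaM (hMfg : (⊤ : Submodule R M).FG)
    (hMfaithful : ∀ r : R, (∀ m : M, r • m = 0) → r = 0)
    (hMmult : ∀ P : Submodule R M, ∃ J : Ideal R, P = J • (⊤ : Submodule R M)) :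
    ∃ (F : Finset M) (t : M → R), (∑ m ∈ F, t m = 1) ∧
      ∀ m ∈ F, ∀ x : M, ∃ c : R, t m • x = c • m := by
  set θ : Ideal R := ⨆ m : M, (Submodule.span R {m}).colon ⊤ with hθ
  have hle : (⊤ : Submodule R M) ≤ θ • ⊤ := by
    intro m _
    obtain ⟨J, hJ⟩ := hMmult (Submodule.span R {m})
    have hJc : J ≤ (Submodule.span R {m}).colon ⊤ := by
      intro j hj
      rw [Submodule.mem_colon]
      intro x _
      rw [hJ]
      exact Submodule.smul_mem_smul hj trivial
    have hm : m ∈ J • (⊤ : Submodule R M) := hJ ▸ Submodule.mem_span_singleton_self m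
    exact Submodule.smul_mono
      (hJc.trans (le_iSup (fun m : M => (Submodule.span R {m}).colon ⊤) m)) le_rfl hm
  obtain ⟨r, hr1, hr0⟩ :=
    Submodule.exists_sub_one_mem_and_smul_eq_zero_of_fg_of_le_smul θ ⊤ hMfg hle
  have hr : r = 0 := hMfaithful r fun m => hr0 m trivial
  have h1 : (1 : R) ∈ θ := by
    have := θ.neg_mem hr1
    rw [hr] at this
    simpa using this
  rw [hθ, Submodule.mem_iSup_iff_exists_finsupp] at h1
  obtain ⟨f, hf, hsum⟩ := h1
  refine ⟨f.support, f, by simpa [Finsupp.sum] using hsum, fun m _ x => ?_⟩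
  have hm := Submodule.mem_colon.1 (hf m) x trivial
  rw [Submodule.mem_span_singleton] at hm
  obtain ⟨c, hc⟩ := hm
  exact ⟨c, hc.symm⟩

private lemma thetaI (I : Ideal R) (hIfg : I.FG)
    (hIfaithful : ∀ r : R, (∀ a ∈ I, r * a = 0) → r = 0)
    (hImult : ∀ J : Ideal R, J ≤ I → ∃ K : Ideal R, J = K * I) :
    ∃ (F : Finset I) (t : I → R), (∑ a ∈ F, t a = 1) ∧
      ∀ a ∈ F, ∀ b ∈ I, ∃ c : R, t a * b = c * (a : R) := by
  set θ : Ideal R := ⨆ a : I, (Ideal.span {(a : R)}).colon (I : Submodule R R) with hθ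
  have hle : (I : Submodule R R) ≤ θ • (I : Submodule R R) := by
    intro a ha
    obtain ⟨K, hK⟩ := hImult (Ideal.span {a})
      (by rwa [Ideal.span_le, Set.singleton_subset_iff])
    have hKc : K ≤ (Ideal.span {a}).colon (I : Submodule R R) := by
      intro k hk
      rw [Submodule.mem_colon]
      intro b hb
      rw [hK, smul_eq_mul]
      exact Ideal.mul_mem_mul hk hb
    have haa : a ∈ K • (I : Submodule R R) := by
      rw [Ideal.smul_eq_mul, ← hK]
      exact Submodule.mem_span_singleton_self a
    exact Submodule.smul_mono
      (hKc.trans (le_iSup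
        (fun a : I => (Ideal.span {(a : R)}).colon (I : Submodule R R)) ⟨a, ha⟩)) le_rfl haa
  obtain ⟨r, hr1, hr0⟩ :=
    Submodule.exists_sub_one_mem_and_smul_eq_zero_of_fg_of_le_smul θ I hIfg hle
  have hr : r = 0 := hIfaithful r fun b hb => by
    have := hr0 b hb
    rwa [smul_eq_mul] at this
  have h1 : (1 : R) ∈ θ := by
    have := θ.neg_mem hr1
    rw [hr] at this
    simpa using this
  rw [hθ, Submodule.mem_iSup_iff_exists_finsupp] at h1
  obtain ⟨f, hf, hsum⟩ := h1
  refine ⟨f.support, f, by simpa [Finsupp.sum] using hsum, fun a _ b hb => ?_⟩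
  have hm := Submodule.mem_colon.1 (hf a) b hb
  rw [smul_eq_mul, Ideal.mem_span_singleton] at hm
  obtain ⟨c, hc⟩ := hm
  exact ⟨c, by rw [hc, mul_comm]⟩

private lemma mem_colonIdeal {N : Submodule R M} {I : Ideal R} {m : M} :
    m ∈ colonIdeal N I ↔ ∀ a ∈ I, a • m ∈ N := Iff.rfl

private lemma annI (I : Ideal R)
    (hIfaithful : ∀ r : R, (∀ a ∈ I, r * a = 0) → r = 0)
    (hMfaithful : ∀ r : R, (∀ m : M, r • m = 0) → r = 0)
    (hMmult : ∀ P : Submodule R M, ∃ J : Ideal R, P = J • (⊤ : Submodule R M)) :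
    ∀ x : M, (∀ b ∈ I, b • x = 0) → x = 0 := by
  intro x hx
  obtain ⟨J, hJ⟩ := hMmult (Submodule.span R {x})
  have hJ0 : ∀ j ∈ J, j = 0 := by
    intro j hj
    refine hIfaithful j fun b hb => hMfaithful _ fun m => ?_
    have hjm : j • m ∈ Submodule.span R {x} := hJ ▸ Submodule.smul_mem_smul hj trivial
    obtain ⟨c, hc⟩ := Submodule.mem_span_singleton.1 hjm
    calc (j * b) • m = b • (j • m) := by rw [mul_comm, mul_smul]
      _ = b • (c • x) := by rw [hc]
      _ = c • (b • x) := smul_comm _ _ _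
      _ = 0 := by rw [hx b hb, smul_zero]
  have hle : Submodule.span R {x} ≤ ⊥ := by
    rw [hJ]
    refine Submodule.smul_le.2 fun r hr n _ => ?_
    rw [hJ0 r hr, zero_smul]
    exact Submodule.zero_mem _
  simpa using hle (Submodule.mem_span_singleton_self x)

private lemma colon_eq (I : Ideal R) (N : Submodule R M) :
    (colonIdeal N I).colon ⊤ = N.colon ((I • (⊤ : Submodule R M) : Submodule R M) : Set M) := by
  ext r
  rw [Submodule.mem_colon, Submodule.mem_colon]
  constructor
  · intro h y hy
    refine Submodule.smul_induction_on hy (fun b hb x _ => ?_)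
      (fun y z hy hz => by rw [smul_add]; exact N.add_mem hy hz)
    have hrx := mem_colonIdeal.1 (h x trivial) b hb
    rwa [smul_comm] at hrx
  · intro h x _
    rw [mem_colonIdeal]
    intro b hb
    have hbx : b • x ∈ I • (⊤ : Submodule R M) := Submodule.smul_mem_smul hb trivial
    have := h _ hbx
    rwa [smul_comm]

private lemma M_cancel
    (hMfaithful : ∀ r : R, (∀ m : M, r • m = 0) → r = 0)
    (hth : ∃ (F : Finset M) (t : M → R), (∑ m ∈ F, t m = 1) ∧
      ∀ m ∈ F, ∀ x : M, ∃ c : R, t m • x = c • m)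
    (J K : Ideal R) (h : J • (⊤ : Submodule R M) ≤ K • ⊤) : J ≤ K := by
  obtain ⟨F, t, h1, hF⟩ := hth
  intro j hj
  refine sq_span F t h1 (x := j) (Q := K) fun m hm => ?_
  have hjm : j • m ∈ K • (⊤ : Submodule R M) := h (Submodule.smul_mem_smul hj trivial)
  have key : ∀ y ∈ K • (⊤ : Submodule R M), ∃ β ∈ K, t m • y = β • m := by
    intro y hy
    refine Submodule.smul_induction_on hy ?_ ?_
    · intro k hk n _
      obtain ⟨c, hc⟩ := hF m hm n
      exact ⟨k * c, K.mul_mem_right _ hk, by rw [smul_comm, hc, smul_smul]⟩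
    · rintro y z ⟨β₁, hβ₁, e₁⟩ ⟨β₂, hβ₂, e₂⟩
      exact ⟨β₁ + β₂, K.add_mem hβ₁ hβ₂, by rw [smul_add, e₁, e₂, add_smul]⟩
  obtain ⟨β, hβ, hβeq⟩ := key _ hjm
  have h0 : (t m * j - β) • m = 0 := by
    rw [sub_smul, ← smul_smul, ← hβeq, sub_self]
  have h2 : ∀ x : M, (t m * (t m * j - β)) • x = 0 := by
    intro x
    obtain ⟨c, hc⟩ := hF m hm x
    rw [mul_comm, mul_smul, hc, smul_comm, h0, smul_zero]
  have h3 : t m * (t m * j - β) = 0 := hMfaithful _ h2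
  have h4 : t m * t m * j = t m * β := by
    have h3' := h3
    rw [mul_sub, ← mul_assoc] at h3'
    exact sub_eq_zero.1 h3'
  show (t m * t m) • j ∈ K
  rw [smul_eq_mul, h4]
  exact K.mul_mem_left _ hβ

private lemma N_eq (I : Ideal R)
    (hImult : ∀ J : Ideal R, J ≤ I → ∃ K : Ideal R, J = K * I)
    (hMmult : ∀ P : Submodule R M, ∃ J : Ideal R, P = J • (⊤ : Submodule R M))
    (hMcancel : ∀ J K : Ideal R, J • (⊤ : Submodule R M) ≤ K • ⊤ → J ≤ K)
    (N : Submodule R M) (hNle : N ≤ I • (⊤ : Submodule R M)) :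
    N = I • colonIdeal N I := by
  obtain ⟨J, hJ⟩ := hMmult N
  have hJI : J ≤ I := hMcancel J I (hJ ▸ hNle)
  obtain ⟨K, hK⟩ := hImult J hJI
  have hN : N = I • (K • (⊤ : Submodule R M)) := by
    rw [hJ, hK, mul_comm, ← Ideal.smul_eq_mul, Submodule.smul_assoc]
  have hKP : K • (⊤ : Submodule R M) ≤ colonIdeal N I := by
    intro x hx
    rw [mem_colonIdeal]
    intro b hb
    rw [hN]
    exact Submodule.smul_mem_smul hb hx
  have hPN : I • colonIdeal N I ≤ N :=
    Submodule.smul_le.2 fun b hb p hp => mem_colonIdeal.1 hp b hb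
  refine le_antisymm ?_ hPN
  calc N = I • (K • (⊤ : Submodule R M)) := hN
    _ ≤ I • colonIdeal N I := Submodule.smul_mono le_rfl hKP

end AuxLemmas

theorem stmt8 {R M : Type*} [CommRing R] [Nontrivial R] [AddCommGroup M] [Module R M]
    (S : Set R) (hS : ∀ a ∈ S, ∀ b ∈ S, a * b ∈ S)
    -- `I` is a finitely generated faithful multiplication ideal of `R`
    (I : Ideal R) (hIfg : I.FG)
    (hIfaithful : ∀ r : R, (∀ a ∈ I, r * a = 0) → r = 0)
    (hImult : ∀ J : Ideal R, J ≤ I → ∃ K : Ideal R, J = K * I)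
    -- `M` is a finitely generated faithful multiplication `R`-module
    (hMfg : (⊤ : Submodule R M).FG)
    (hMfaithful : ∀ r : R, (∀ m : M, r • m = 0) → r = 0)
    (hMmult : ∀ P : Submodule R M, ∃ J : Ideal R, P = J • (⊤ : Submodule R M))
    (N : Submodule R M) (hNle : N ≤ I • (⊤ : Submodule R M)) :
    IsWeaklySPrimeIn S N I ↔ IsWeaklySPrime S (colonIdeal N I) := by
  have hann : ∀ x : M, (∀ b ∈ I, b • x = 0) → x = 0 :=
    annI I hIfaithful hMfaithful hMmult
  have hcolon : (colonIdeal N I).colon ⊤ = N.colon ((I • (⊤ : Submodule R M) : Submodule R M) : Set M) := colon_eq I N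
  constructor
  · rintro ⟨hdisj, s, hsS, hs⟩
    refine ⟨by rw [hcolon]; exact hdisj, s, hsS, ?_⟩
    intro a m ham hne
    by_cases hsa : s * a ∈ (colonIdeal N I).colon ⊤
    · exact Or.inl hsa
    right
    have hsa' : s * a ∉ N.colon ((I • (⊤ : Submodule R M) : Submodule R M) : Set M) := by
      rw [← hcolon]; exact hsa
    have hb0 : ∃ b₀ ∈ I, b₀ • (a • m) ≠ 0 := by
      by_contra hcon
      push_neg at hcon
      exact hne (hann _ hcon)
    obtain ⟨b₀, hb₀I, hb₀⟩ := hb0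
    have main : ∀ b ∈ I, a • (b • m) ≠ 0 → b • (s • m) ∈ N := by
      intro b hb hne'
      have h1 : b • m ∈ I • (⊤ : Submodule R M) := Submodule.smul_mem_smul hb trivial
      have h2 : a • (b • m) ∈ N := by
        rw [smul_comm]
        exact mem_colonIdeal.1 ham b hb
      rcases hs a (b • m) h1 h2 hne' with hh | hh
      · exact absurd hh hsa'
      · rwa [smul_comm] at hh
    rw [mem_colonIdeal]
    intro b hb
    by_cases hz : a • (b • m) = 0
    · have hb' : b + b₀ ∈ I := I.add_mem hb hb₀I
      have hsum : (b + b₀) • (s • m) ∈ N := by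
        refine main _ hb' ?_
        rw [add_smul, smul_add, hz, zero_add, smul_comm]
        exact hb₀
      have hb₀s : b₀ • (s • m) ∈ N := by
        refine main b₀ hb₀I ?_
        rw [smul_comm]
        exact hb₀
      have heq : b • (s • m) = (b + b₀) • (s • m) - b₀ • (s • m) := by
        rw [add_smul]
        abel
      rw [heq]
      exact N.sub_mem hsum hb₀s
    · exact main b hb hz
  · rintro ⟨hdisj, s, hsS, hs⟩
    have hthM := thetaM hMfg hMfaithful hMmult
    have hMcancel : ∀ J K : Ideal R, J • (⊤ : Submodule R M) ≤ K • ⊤ → J ≤ K :=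
      fun J K h => M_cancel hMfaithful hthM J K h
    have hNeq : N = I • colonIdeal N I := N_eq I hImult hMmult hMcancel N hNle
    refine ⟨by rw [← hcolon]; exact hdisj, s, hsS, ?_⟩
    intro a m hmIM ham hne
    by_cases hsa : s * a ∈ N.colon ((I • (⊤ : Submodule R M) : Submodule R M) : Set M)
    · exact Or.inl hsa
    right
    have hsaP : s * a ∉ (colonIdeal N I).colon ⊤ := by
      rw [hcolon]; exact hsa
    obtain ⟨F, t, h1, hF⟩ := thetaI I hIfg hIfaithful hImult
    have hzex : ∀ i ∈ F, ∃ z : M, t i • m = (i : R) • z := by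
      intro i hi
      obtain ⟨w, _, hweq⟩ := smul_shift I (t i) (i : R) (hF i hi) ⊤ m hmIM
      exact ⟨w, hweq⟩
    choose! z hz using hzex
    have hamP : a • m ∈ I • colonIdeal N I := hNeq ▸ ham
    have step3 : ∀ i ∈ F, a • (t i • z i) ∈ colonIdeal N I := by
      intro i hi
      obtain ⟨p, hp, hpeq⟩ := smul_shift I (t i) (i : R) (hF i hi) _ _ hamP
      have e1 : (i : R) • (a • z i - p) = 0 := by
        have e0 : (i : R) • (a • z i) = t i • (a • m) := by
          rw [smul_comm (i : R) a, ← hz i hi, smul_comm]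
        rw [smul_sub, e0, hpeq, sub_self]
      have e2 : t i • (a • z i - p) = 0 := by
        refine hann _ fun b hb => ?_
        obtain ⟨c, hc⟩ := hF i hi b hb
        calc b • t i • (a • z i - p) = (t i * b) • (a • z i - p) := by
              rw [smul_smul, mul_comm]
          _ = (c * (i : R)) • (a • z i - p) := by rw [hc]
          _ = c • ((i : R) • (a • z i - p)) := by rw [mul_smul]
          _ = 0 := by rw [e1, smul_zero]
      have e3 : t i • (a • z i) = t i • p := by
        rw [smul_sub] at e2
        exact sub_eq_zero.1 e2
      have e4 : a • (t i • z i) = t i • p := by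
        rw [smul_comm a (t i) (z i)]
        exact e3
      rw [e4]
      exact Submodule.smul_mem _ _ hp
    have hex : ∃ i₀ ∈ F, a • (t i₀ • z i₀) ≠ 0 := by
      by_contra hcon
      push_neg at hcon
      refine hne ?_
      have hbot : a • m ∈ (⊥ : Submodule R M) := by
        refine sq_span F t h1 fun i hi => ?_
        rw [Submodule.mem_bot]
        have e1 : (t i * t i) • (a • m) = t i • (a • (t i • m)) := by module
        rw [e1, hz i hi]
        have e2 : t i • (a • ((i : R) • z i)) = (i : R) • (a • (t i • z i)) := by module
        rw [e2, hcon i hi, smul_zero]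
      simpa using hbot
    obtain ⟨i₀, hi₀F, hi₀⟩ := hex
    have happ : ∀ i ∈ F, a • (t i • z i) ∈ colonIdeal N I → a • (t i • z i) ≠ 0 →
        s • (t i • z i) ∈ colonIdeal N I := by
      intro i hi hmem hnz
      rcases hs a _ hmem hnz with hh | hh
      · exact absurd hh hsaP
      · exact hh
    have hgood : s • (t i₀ • z i₀) ∈ colonIdeal N I := happ i₀ hi₀F (step3 _ hi₀F) hi₀
    have hall : ∀ i ∈ F, s • (t i • z i) ∈ colonIdeal N I := by
      intro i hi
      by_cases hnz : a • (t i • z i) = 0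
      · have hwmem : a • (t i • z i + t i₀ • z i₀) ∈ colonIdeal N I := by
          rw [smul_add]
          exact Submodule.add_mem _ (step3 i hi) (step3 i₀ hi₀F)
        have hwne : a • (t i • z i + t i₀ • z i₀) ≠ 0 := by
          rw [smul_add, hnz, zero_add]
          exact hi₀
        rcases hs a _ hwmem hwne with hh | hh
        · exact absurd hh hsaP
        · rw [smul_add] at hh
          have := Submodule.sub_mem _ hh hgood
          simpa using this
      · exact happ i hi (step3 i hi) hnz
    rw [hNeq]
    refine sq_span F t h1 fun i hi => ?_
    have heq : (t i * t i) • (s • m) = (i : R) • (s • (t i • z i)) := by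
      have e1 : (t i * t i) • (s • m) = t i • (s • (t i • m)) := by module
      rw [e1, hz i hi]
      module
    rw [heq]
    exact Submodule.smul_mem_smul i.2 (hall i hi)
end

section
/- Let R be a commutative ring, S a multiplicatively closed subset of R, and M a faithful multiplication R-module. If N is a weakly S-prime submodule of M that is not an S-prime submodule of M, then there exists s ∈ S such that s•(√0_R)•N = 0, where √0_R is the nilradical of R. -/
theorem stmt10 {R M : Type*} [CommRing R] [Nontrivial R] [AddCommGroup M] [Module R M]
    (S : Set R) (hS : ∀ a ∈ S, ∀ b ∈ S, a * b ∈ S)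
    (hfaithful : ∀ r : R, (∀ m : M, r • m = 0) → r = 0)
    (hmult : ∀ P : Submodule R M, ∃ I : Ideal R, P = I • (⊤ : Submodule R M))
    (N : Submodule R M) (hN : IsWeaklySPrime S N) (hNnot : ¬ IsSPrime S N) :
    ∃ s ∈ S, ∀ a ∈ nilradical R, ∀ n ∈ N, s • a • n = 0 := by
  obtain ⟨hdisj, s, hsS, hweak⟩ := hN
  refine ⟨s, hsS, ?_⟩
  intro c hc n hn
  by_cases hcn : c • n = 0
  · rw [hcn, smul_zero]
  obtain ⟨k, hck⟩ := hc
  have hpowS : ∀ j : ℕ, s ^ (j + 1) ∈ S := by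
    intro j
    induction j with
    | zero => simpa using hsS
    | succ i ih => rw [pow_succ]; exact hS _ ih _ hsS
  -- extract a counterexample pair at s^(k+1)
  have hfail : ∃ (a : R) (m : M), a • m ∈ N ∧ s ^ (k+1) * a ∉ N.colon ⊤ ∧
      s ^ (k+1) • m ∉ N := by
    by_contra h
    push_neg at h
    exact hNnot ⟨hdisj, s ^ (k+1), hpowS k,
      fun a m ham => or_iff_not_imp_left.mpr (fun hna => h a m ham hna)⟩
  obtain ⟨a, m, hamN, hKa, hKm⟩ := hfail
  have hsa : s * a ∉ N.colon ⊤ := by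
    intro h
    apply hKa
    have e : s ^ (k+1) * a = s ^ k * (s * a) := by ring
    rw [e]
    exact Ideal.mul_mem_left _ _ h
  have hjm : ∀ j : ℕ, 1 ≤ j → j ≤ k + 1 → s ^ j • m ∉ N := by
    intro j h1 h2 hmem
    apply hKm
    have e0 : k + 1 - j + j = k + 1 := by omega
    have e : s ^ (k+1) • m = s ^ (k+1-j) • (s ^ j • m) := by
      rw [← mul_smul, ← pow_add, e0]
    rw [e]
    exact N.smul_mem _ hmem
  have hsm : s • m ∉ N := by simpa using hjm 1 le_rfl (by omega)
  have ham0 : a • m = 0 := by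
    by_contra h
    rcases hweak a m hamN h with h1 | h2
    · exact hsa h1
    · exact hsm h2
  have haN : ∀ n' ∈ N, a • n' = 0 := by
    intro n' hn'
    by_contra h
    have hmem : a • (m + n') ∈ N := by
      rw [smul_add, ham0, zero_add]; exact N.smul_mem a hn'
    have hne : a • (m + n') ≠ 0 := by
      rw [smul_add, ham0, zero_add]; exact h
    rcases hweak _ _ hmem hne with h1 | h2
    · exact hsa h1
    · apply hsm
      rw [smul_add] at h2
      simpa using N.sub_mem h2 (N.smul_mem s hn')
  have hPm : ∀ p ∈ N.colon ⊤, p • m = 0 := by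
    intro p hp
    by_contra h
    have hpm : p • m ∈ N := Submodule.mem_colon.mp hp m trivial
    have hmem : (a + p) • m ∈ N := by rw [add_smul, ham0, zero_add]; exact hpm
    have hne : (a + p) • m ≠ 0 := by rw [add_smul, ham0, zero_add]; exact h
    rcases hweak _ _ hmem hne with h1 | h2
    · apply hsa
      have e : s * a = s * (a + p) - s * p := by ring
      rw [e]
      exact Submodule.sub_mem _ h1 (Ideal.mul_mem_left _ _ hp)
    · exact hsm h2
  have hPN : ∀ p ∈ N.colon ⊤, ∀ n' ∈ N, p • n' = 0 := by
    intro p hp n' hn'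
    by_contra h
    have e : (a + p) • (m + n') = p • n' := by
      rw [add_smul, smul_add, smul_add, ham0, haN n' hn', hPm p hp]
      simp
    have hmem : (a + p) • (m + n') ∈ N := by rw [e]; exact N.smul_mem p hn'
    have hne : (a + p) • (m + n') ≠ 0 := by rw [e]; exact h
    rcases hweak _ _ hmem hne with h1 | h2
    · apply hsa
      have e2 : s * a = s * (a + p) - s * p := by ring
      rw [e2]
      exact Submodule.sub_mem _ h1 (Ideal.mul_mem_left _ _ hp)
    · apply hsm
      rw [smul_add] at h2
      simpa using N.sub_mem h2 (N.smul_mem s hn')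
  -- main induction
  have key : ∀ t : ℕ, ∀ w : M, c ^ t • w = 0 → (∀ p ∈ N.colon ⊤, p • w = 0) →
      (∀ j : ℕ, 1 ≤ j → j ≤ t + 1 → s ^ j • w ∉ N) → s • c • n = 0 := by
    intro t
    induction t with
    | zero =>
      intro w hw _ hj
      exfalso
      apply hj 1 le_rfl le_rfl
      rw [pow_zero, one_smul] at hw
      rw [pow_one, hw, smul_zero]
      exact N.zero_mem
    | succ t ih =>
      intro w hw hpw hj
      have hcz : c • (c ^ t • w) = 0 := by
        rw [← mul_smul, ← pow_succ']
        exact hw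
      have hmem : c • (n + c ^ t • w) ∈ N := by
        rw [smul_add, hcz, add_zero]; exact N.smul_mem c hn
      have hne : c • (n + c ^ t • w) ≠ 0 := by
        rw [smul_add, hcz, add_zero]; exact hcn
      rcases hweak _ _ hmem hne with h1 | h2
      · rw [smul_smul]
        exact hPN _ h1 n hn
      · have hszN : s • (c ^ t • w) ∈ N := by
          rw [smul_add] at h2
          simpa using N.sub_mem h2 (N.smul_mem s hn)
        have hsz0 : s • (c ^ t • w) = 0 := by
          by_contra h
          have hmem2 : c ^ t • (s • w) ∈ N := by rw [smul_comm]; exact hszN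
          have hne2 : c ^ t • (s • w) ≠ 0 := by rw [smul_comm]; exact h
          rcases hweak _ _ hmem2 hne2 with h3 | h4
          · apply h
            have h5 := hpw _ h3
            rw [mul_smul] at h5
            exact h5
          · refine hj 2 (by omega) (by omega) ?_
            rw [pow_two, mul_smul]
            exact h4
        apply ih (s • w)
        · rw [smul_comm]; exact hsz0
        · intro p hp
          rw [smul_comm, hpw p hp, smul_zero]
        · intro j h1 h2 hmm
          refine hj (j + 1) (by omega) (by omega) ?_
          rw [pow_succ, mul_smul]
          exact hmm
  exact key k m (by rw [hck, zero_smul]) hPm hjm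
end

section
/- Let R be a commutative ring, S a multiplicatively closed subset of R, and M a faithful multiplication R-module. If N is a weakly S-prime submodule of M, then either N ⊆ (√0_R)•M or there exists s ∈ S with s•(√0_R)•M ⊆ N, where √0_R is the nilradical of R. Moreover, if R is a reduced ring, then N = 0 or N is an S-prime submodule of M. -/
theorem stmt12 {R M : Type*} [CommRing R] [Nontrivial R] [AddCommGroup M] [Module R M]
    (S : Set R) (hS : ∀ a ∈ S, ∀ b ∈ S, a * b ∈ S)
    (hfaithful : ∀ r : R, (∀ m : M, r • m = 0) → r = 0)
    (hmult : ∀ P : Submodule R M, ∃ I : Ideal R, P = I • (⊤ : Submodule R M))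
    (N : Submodule R M) (hN : IsWeaklySPrime S N) :
    (N ≤ nilradical R • (⊤ : Submodule R M) ∨
      ∃ s ∈ S, ∀ a ∈ nilradical R, ∀ m : M, s • a • m ∈ N) ∧
    (IsReduced R → N = ⊥ ∨ IsSPrime S N) := by
  obtain ⟨hdisj, s, hsS, hws⟩ := hN
  have hPS : ∀ r ∈ N.colon ⊤, r ∉ S := by
    intro r hr hrS
    exact Set.eq_empty_iff_forall_notMem.mp hdisj r ⟨hr, hrS⟩
  have hpow : ∀ k : ℕ, 1 ≤ k → s ^ k ∈ S := by
    intro k hk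
    induction k with
    | zero => omega
    | succ n ih =>
      rcases Nat.eq_zero_or_pos n with h | h
      · simpa [h] using hsS
      · rw [pow_succ]
        exact hS _ (ih h) _ hsS
  by_cases hA : ∀ (a : R) (m : M), a • m ∈ N → s * a ∈ N.colon ⊤ ∨ s • m ∈ N
  · constructor
    · right
      refine ⟨s, hsS, fun a ha m => ?_⟩
      have key : s * a ∈ N.colon ⊤ := by
        by_contra hcon
        have Q : ∀ (j : ℕ) (m : M), a ^ j • m ∈ N → s ^ j • m ∈ N := by
          intro j
          induction j with
          | zero => simp
          | succ j ih =>
            intro m hm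
            rw [pow_succ', mul_smul] at hm
            rcases hA a (a ^ j • m) hm with h | h
            · exact absurd h hcon
            · rw [smul_comm] at h
              have := ih (s • m) h
              rw [smul_comm, ← mul_smul, ← pow_succ'] at this
              exact this
        obtain ⟨k, hk⟩ := ha
        have hk1 : 1 ≤ k := by
          rcases Nat.eq_zero_or_pos k with h | h
          · subst h; simp at hk
          · exact h
        have hsk : s ^ k ∈ N.colon ⊤ := by
          rw [Submodule.mem_colon]
          intro p _
          exact Q k p (by rw [hk, zero_smul]; exact N.zero_mem)
        exact hPS _ hsk (hpow k hk1)
      have := Submodule.mem_colon.mp key m trivial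
      rwa [smul_smul]
    · intro _
      right
      exact ⟨hdisj, s, hsS, hA⟩
  · push_neg at hA
    obtain ⟨a, m, ham, hsa, hsm⟩ := hA
    have ham0 : a • m = 0 := by
      by_contra h
      rcases hws a m ham h with h' | h' <;> [exact hsa h'; exact hsm h']
    have haN : ∀ n ∈ N, a • n = 0 := by
      intro n hn
      by_contra h
      have h1 : a • (m + n) ∈ N := by
        rw [smul_add]; exact N.add_mem ham (N.smul_mem a hn)
      have h2 : a • (m + n) ≠ 0 := by rwa [smul_add, ham0, zero_add]
      rcases hws _ _ h1 h2 with h3 | h3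
      · exact hsa h3
      · rw [smul_add] at h3
        exact hsm (by simpa using N.sub_mem h3 (N.smul_mem s hn))
    have hPm : ∀ b ∈ N.colon ⊤, b • m = 0 := by
      intro b hb
      by_contra h
      have h1 : (a + b) • m ∈ N := by
        rw [add_smul, ham0, zero_add]
        exact Submodule.mem_colon.mp hb m trivial
      have h2 : (a + b) • m ≠ 0 := by rwa [add_smul, ham0, zero_add]
      rcases hws _ _ h1 h2 with h3 | h3
      · rw [mul_add] at h3
        have hsb : s * b ∈ N.colon ⊤ := by
          rw [Submodule.mem_colon]
          intro p _
          rw [mul_smul]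
          exact N.smul_mem s (Submodule.mem_colon.mp hb p trivial)
        exact hsa (by simpa using Submodule.sub_mem _ h3 hsb)
      · exact hsm h3
    have hPN : ∀ b ∈ N.colon ⊤, ∀ n ∈ N, b • n = 0 := by
      intro b hb n hn
      by_contra h
      have h1 : (a + b) • (m + n) ∈ N := by
        rw [add_smul, smul_add, smul_add, ham0, haN n hn, hPm b hb]
        simpa using Submodule.mem_colon.mp hb n trivial
      have h2 : (a + b) • (m + n) ≠ 0 := by
        simp only [add_smul, smul_add, ham0, haN n hn, hPm b hb, zero_add, add_zero]
        exact h
      rcases hws _ _ h1 h2 with h3 | h3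
      · rw [mul_add] at h3
        have hsb : s * b ∈ N.colon ⊤ := by
          rw [Submodule.mem_colon]
          intro p _
          rw [mul_smul]
          exact N.smul_mem s (Submodule.mem_colon.mp hb p trivial)
        exact hsa (by simpa using Submodule.sub_mem _ h3 hsb)
      · rw [smul_add] at h3
        exact hsm (by simpa using N.sub_mem h3 (N.smul_mem s hn))
    have hP2 : ∀ b ∈ N.colon ⊤, ∀ c ∈ N.colon ⊤, b * c = 0 := by
      intro b hb c hc
      apply hfaithful
      intro x
      rw [mul_smul]
      exact hPN b hb _ (Submodule.mem_colon.mp hc x trivial)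
    obtain ⟨I, hI⟩ := hmult N
    have hIP : I ≤ N.colon ⊤ := by
      intro r hr
      rw [Submodule.mem_colon]
      intro p _
      rw [hI]
      exact Submodule.smul_mem_smul hr trivial
    constructor
    · left
      rw [hI]
      apply Submodule.smul_mono_left
      intro r hr
      rw [mem_nilradical]
      exact ⟨2, by rw [pow_two]; exact hP2 r (hIP hr) r (hIP hr)⟩
    · intro hred
      left
      have hIbot : I = ⊥ := by
        rw [eq_bot_iff]
        intro r hr
        have hnil : IsNilpotent r := ⟨2, by rw [pow_two]; exact hP2 r (hIP hr) r (hIP hr)⟩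
        simpa using hnil.eq_zero
      rw [hI, hIbot, Submodule.bot_smul]
end

section
/- Let R be a commutative ring, S a multiplicatively closed subset of R, M an R-module, and N a submodule of M, and assume Z(M) ∩ S = ∅. If N is a weakly S-prime submodule of M, then the localized submodule S⁻¹N is a weakly prime submodule of the S⁻¹R-module S⁻¹M, and there exists s ∈ S such that (N :_M t) ⊆ (N :_M s) for all t ∈ S. -/
/-- A proper submodule `P` of a module is *weakly prime* if whenever `0 ≠ x • p ∈ P`,
either `x ∈ (P : M)` or `p ∈ P`. -/
def IsWeaklyPrime {A M : Type*} [CommRing A] [AddCommGroup M] [Module A M]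
    (P : Submodule A M) : Prop :=
  P ≠ ⊤ ∧ ∀ (x : A) (p : M), x • p ∈ P → x • p ≠ 0 → x ∈ P.colon ⊤ ∨ p ∈ P

theorem stmt13 {R M : Type*} [CommRing R] [Nontrivial R] [AddCommGroup M] [Module R M]
    (S : Set R) (hS : ∀ a ∈ S, ∀ b ∈ S, a * b ∈ S)
    (hZ : {r : R | ∃ m : M, m ≠ 0 ∧ r • m = 0} ∩ S = ∅)
    (N : Submodule R M) (hN : IsWeaklySPrime S N) :
    IsWeaklyPrime (N.localized (Submonoid.closure S)) ∧
      ∃ s ∈ S, ∀ t ∈ S, ∀ m : M, t • m ∈ N → s • m ∈ N := by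
  obtain ⟨hdisj, s, hsS, hs⟩ := hN
  set p : Submonoid R := Submonoid.closure S with hp
  have hclo : ∀ t ∈ p, t = 1 ∨ t ∈ S := by
    intro t ht
    induction ht using Submonoid.closure_induction with
    | mem x hx => exact Or.inr hx
    | one => exact Or.inl rfl
    | mul x y hx hy ihx ihy =>
      rcases ihx with h1 | h1 <;> rcases ihy with h2 | h2
      · exact Or.inl (by rw [h1, h2, one_mul])
      · exact Or.inr (by rw [h1, one_mul]; exact h2)
      · exact Or.inr (by rw [h2, mul_one]; exact h1)
      · exact Or.inr (hS x h1 y h2)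
  have hZ' : ∀ t ∈ S, ∀ m : M, t • m = 0 → m = 0 := by
    intro t ht m hm
    by_contra h0
    exact Set.eq_empty_iff_forall_notMem.mp hZ t ⟨⟨m, h0, hm⟩, ht⟩
  have hinj : ∀ t ∈ p, ∀ m : M, t • m = 0 → m = 0 := by
    intro t ht m hm
    rcases hclo t ht with h | h
    · simpa [h] using hm
    · exact hZ' t h m hm
  have hdisj' : ∀ t ∈ S, t ∉ N.colon ⊤ := by
    intro t ht hmem
    exact Set.eq_empty_iff_forall_notMem.mp hdisj t ⟨hmem, ht⟩
  have key : ∀ t ∈ S, ∀ m : M, t • m ∈ N → s • m ∈ N := by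
    intro t ht m hm
    by_cases h0 : t • m = 0
    · have : m = 0 := hZ' t ht m h0
      rw [this, smul_zero]; exact N.zero_mem
    · rcases hs t m hm h0 with h | h
      · exact absurd h (hdisj' (s * t) (hS s hsS t ht))
      · exact h
  have key' : ∀ t ∈ p, ∀ m : M, t • m ∈ N → s • m ∈ N := by
    intro t ht m hm
    rcases hclo t ht with h | h
    · rw [h, one_smul] at hm
      exact N.smul_mem s hm
    · exact key t h m hm
  set f := LocalizedModule.mkLinearMap p M with hf
  constructor
  · constructor
    · -- properness
      intro htop
      refine hdisj' s hsS (Submodule.mem_colon.mpr fun m _ => ?_)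
      have : IsLocalizedModule.mk' f m (1 : p) ∈ N.localized p := by
        rw [htop]; trivial
      obtain ⟨n, hn, w, hw⟩ := this
      obtain ⟨c, hc⟩ := (IsLocalizedModule.mk'_eq_mk'_iff f n m w 1).mp hw
      have hcw : ((c * w : p) : R) • m ∈ N := by
        have : (c : R) • (w : R) • m = (c : R) • (1 : R) • n := by
          simpa [Submonoid.smul_def] using hc
        rw [one_smul] at this
        rw [Submonoid.coe_mul, mul_smul, this]
        exact N.smul_mem _ hn
      exact key' _ (c * w).2 m hcw
    · -- weakly prime condition
      intro x q hxq hxq0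
      obtain ⟨⟨a, u⟩, hau⟩ := IsLocalization.mk'_surjective p x
      dsimp only at hau
      obtain ⟨⟨m, v⟩, hmv⟩ := IsLocalizedModule.mk'_surjective p f q
      simp only [Function.uncurry] at hmv
      have hxqeq : x • q = IsLocalizedModule.mk' f (a • m) (u * v) := by
        rw [← hau, ← hmv, IsLocalizedModule.mk'_smul_mk']
      obtain ⟨n, hn, w, hw⟩ := hxq
      rw [hxqeq] at hw hxq0
      obtain ⟨c, hc⟩ := (IsLocalizedModule.mk'_eq_mk'_iff f n (a • m) w (u * v)).mp hw
      have hcwm : (((c * w : p) : R) * a) • m ∈ N := by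
        have : (c : R) • (w : R) • (a • m) = (c : R) • ((u * v : p) : R) • n := by
          simpa [Submonoid.smul_def] using hc
        rw [Submonoid.coe_mul, mul_assoc, mul_smul, mul_smul, this]
        exact N.smul_mem _ (N.smul_mem _ hn)
      have ham0 : a • m ≠ 0 := by
        intro h
        rw [h, IsLocalizedModule.mk'_zero] at hxq0
        exact hxq0 rfl
      have hcwm0 : (((c * w : p) : R) * a) • m ≠ 0 := by
        intro h
        rw [mul_smul] at h
        exact ham0 (hinj _ (c * w).2 _ h)
      rcases hs _ m hcwm hcwm0 with h | h
      · left
        refine Submodule.mem_colon.mpr fun q' _ => ?_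
        obtain ⟨⟨m', t⟩, hm't⟩ := IsLocalizedModule.mk'_surjective p f q'
        simp only [Function.uncurry] at hm't
        have hσ : s * ((c * w : p) : R) ∈ p :=
          p.mul_mem (Submonoid.subset_closure hsS) (c * w).2
        refine ⟨(s * (((c * w : p) : R) * a)) • m',
          Submodule.mem_colon.mp h m' trivial, (⟨_, hσ⟩ : p) * (u * t), ?_⟩
        have : ((⟨s * ((c * w : p) : R), hσ⟩ : p) : R) • (a • m')
            = (s * (((c * w : p) : R) * a)) • m' := by
          rw [← mul_smul, mul_assoc]
        rw [← this, ← Submonoid.smul_def, IsLocalizedModule.mk'_cancel_left,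
          ← hm't, ← hau, IsLocalizedModule.mk'_smul_mk']
      · right
        refine ⟨s • m, h, (⟨s, Submonoid.subset_closure hsS⟩ : p) * v, ?_⟩
        rw [← hmv]
        exact IsLocalizedModule.mk'_cancel_left f m ⟨s, _⟩ v
  · exact ⟨s, hsS, key⟩
end

section
/- Let R be a commutative ring, S a multiplicatively closed subset of R, M a finitely generated R-module, and N a submodule of M with (N :_R M) ∩ S = ∅, and assume Z(M) ∩ S = ∅. If the localized submodule S⁻¹N is a weakly prime submodule of the S⁻¹R-module S⁻¹M and there exists s ∈ S such that (N :_M t) ⊆ (N :_M s) for all t ∈ S, then N is a weakly S-prime submodule of M. -/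
theorem stmt14 {R M : Type*} [CommRing R] [Nontrivial R] [AddCommGroup M] [Module R M]
    (S : Set R) (hS : ∀ a ∈ S, ∀ b ∈ S, a * b ∈ S)
    (hMfg : (⊤ : Submodule R M).FG)
    (hZ : {r : R | ∃ m : M, m ≠ 0 ∧ r • m = 0} ∩ S = ∅)
    (N : Submodule R M) (hdisj : (N.colon ⊤ : Set R) ∩ S = ∅)
    (hloc : IsWeaklyPrime (N.localized (Submonoid.closure S)))
    (hcolon : ∃ s ∈ S, ∀ t ∈ S, ∀ m : M, t • m ∈ N → s • m ∈ N) :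
    IsWeaklySPrime S N := by
  obtain ⟨s, hsS, hs⟩ := hcolon
  set p := Submonoid.closure S with hp
  set f := LocalizedModule.mkLinearMap p M with hf
  -- every element of the closure is 1 or in S
  have hcl : ∀ t ∈ p, t = 1 ∨ t ∈ S := by
    intro t ht
    refine Submonoid.closure_induction (fun x hx => Or.inr hx) (Or.inl rfl) ?_ ht
    rintro x y hx hy (rfl | hxS) (rfl | hyS)
    · simp
    · simpa using Or.inr hyS
    · simpa using Or.inr hxS
    · exact Or.inr (hS x hxS y hyS)
  -- reduction: if t • x ∈ N for t in the closure then s • x ∈ N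
  have hred : ∀ (t : p) (x : M), (t : R) • x ∈ N → s • x ∈ N := by
    intro t x hx
    rcases hcl t.1 t.2 with h1 | hS'
    · rw [h1] at hx
      simpa using N.smul_mem s (by simpa using hx)
    · exact hs t hS' x hx
  -- injectivity of the action of closure elements
  have hinj : ∀ (t : p) (x : M), (t : R) • x = 0 → x = 0 := by
    intro t x htx
    by_contra hx
    rcases hcl t.1 t.2 with h1 | hS'
    · rw [h1, one_smul] at htx; exact hx htx
    · exact Set.eq_empty_iff_forall_notMem.mp hZ t ⟨⟨x, hx, htx⟩, hS'⟩
  -- pulling back membership in the localized submodule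
  have hback : ∀ x : M, f x ∈ N.localized p → s • x ∈ N := by
    rintro x ⟨n, hn, u, hu⟩
    rw [show f x = IsLocalizedModule.mk' f x 1 from (IsLocalizedModule.mk'_one p f x).symm]
      at hu
    obtain ⟨c, hc⟩ := (IsLocalizedModule.mk'_eq_mk'_iff f n x u 1).mp hu
    simp only [one_smul] at hc
    have hcu : ((c * u : p) : R) • x ∈ N := by
      have : ((c * u : p) : R) • x = (c : R) • (u : R) • x := by
        push_cast; rw [mul_smul]
      rw [this]
      have : (c : R) • (u : R) • x = (c : R) • n := by
        simpa [Submonoid.smul_def] using hc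
      rw [this]
      exact N.smul_mem _ hn
    exact hred _ _ hcu
  -- nonvanishing of images
  have hne0 : ∀ x : M, x ≠ 0 → f x ≠ 0 := by
    intro x hx h0
    obtain ⟨c, hc⟩ := (IsLocalizedModule.eq_zero_iff p f).mp h0
    exact hx (hinj c x (by simpa [Submonoid.smul_def] using hc))
  refine ⟨hdisj, s, hsS, fun a m hmN hne => ?_⟩
  have hsm : algebraMap R (Localization p) a • f m = f (a • m) := by
    rw [map_smul, algebraMap_smul]
  have hmem : f (a • m) ∈ N.localized p :=
    ⟨a • m, hmN, 1, IsLocalizedModule.mk'_one p f _⟩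
  rcases hloc.2 (algebraMap R (Localization p) a) (f m)
      (by rw [hsm]; exact hmem) (by rw [hsm]; exact hne0 _ hne) with hcol | hN
  · left
    rw [Submodule.mem_colon]
    intro m' _
    have : f (a • m') ∈ N.localized p := by
      rw [← (show algebraMap R (Localization p) a • f m' = f (a • m') by
        rw [map_smul, algebraMap_smul])]
      exact Submodule.mem_colon.mp hcol (f m') trivial
    have := hback _ this
    rwa [← mul_smul] at this
    -- note: goal is (s * a) • m' ∈ N; s • a • m' = (s*a) • m'
  · right
    exact hback m hN
end

section
/- Let R be a commutative ring and S a multiplicatively closed subset of R. If I is a weakly S-prime ideal of R and the zero ideal {0} is an S-prime ideal of R, then the radical √I is an S-prime ideal of R. -/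
/-- An ideal `I` of `R` with `I ∩ S = ∅` is an *`S`-prime ideal* if there exists `s ∈ S`
such that for all `a, b ∈ R` with `a * b ∈ I`, either `s * a ∈ I` or `s * b ∈ I`. -/
def IsSPrimeIdeal {R : Type*} [CommRing R] (S : Set R) (I : Ideal R) : Prop :=
  ((I : Set R) ∩ S = ∅) ∧
    ∃ s ∈ S, ∀ a b : R, a * b ∈ I → s * a ∈ I ∨ s * b ∈ I

theorem stmt16 {R : Type*} [CommRing R] [Nontrivial R]
    (S : Set R) (hS : ∀ a ∈ S, ∀ b ∈ S, a * b ∈ S)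
    (I : Ideal R) (hI : IsWeaklySPrimeIdeal S I)
    (h0 : IsSPrimeIdeal S (⊥ : Ideal R)) :
    IsSPrimeIdeal S I.radical := by
  obtain ⟨hdisj, s₁, hs₁S, hs₁⟩ := hI
  obtain ⟨-, s₀, hs₀S, hs₀⟩ := h0
  have hpow : ∀ t ∈ S, ∀ n : ℕ, t ^ (n + 1) ∈ S := by
    intro t ht n
    induction n with
    | zero => simpa using ht
    | succ k ih => rw [pow_succ]; exact hS _ ih _ ht
  constructor
  · ext x
    simp only [Set.mem_inter_iff, Set.mem_empty_iff_false, iff_false, not_and]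
    intro hx hxS
    obtain ⟨n, hn⟩ := hx
    have hn1 : x ^ (n + 1) ∈ I := by rw [pow_succ]; exact I.mul_mem_right _ hn
    have : x ^ (n + 1) ∈ (I : Set R) ∩ S := ⟨hn1, hpow x hxS n⟩
    rw [hdisj] at this
    exact this
  · refine ⟨s₀ * s₁, hS _ hs₀S _ hs₁S, ?_⟩
    intro a b hab
    obtain ⟨n, hn⟩ := hab
    have hn1 : (a * b) ^ (n + 1) ∈ I := by rw [pow_succ]; exact I.mul_mem_right _ hn
    rw [mul_pow] at hn1
    by_cases hz : a ^ (n + 1) * b ^ (n + 1) = 0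
    · rcases hs₀ _ _ (by simpa using hz) with h | h
      · left
        refine ⟨n + 1, ?_⟩
        have : (s₀ * s₁ * a) ^ (n + 1) =
            s₁ ^ (n + 1) * s₀ ^ n * (s₀ * a ^ (n + 1)) := by ring
        rw [this, (by simpa using h : s₀ * a ^ (n + 1) = 0), mul_zero]
        exact I.zero_mem
      · right
        refine ⟨n + 1, ?_⟩
        have : (s₀ * s₁ * b) ^ (n + 1) =
            s₁ ^ (n + 1) * s₀ ^ n * (s₀ * b ^ (n + 1)) := by ring
        rw [this, (by simpa using h : s₀ * b ^ (n + 1) = 0), mul_zero]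
        exact I.zero_mem
    · rcases hs₁ _ _ hn1 hz with h | h
      · left
        refine ⟨n + 1, ?_⟩
        have : (s₀ * s₁ * a) ^ (n + 1) =
            s₀ ^ (n + 1) * s₁ ^ n * (s₁ * a ^ (n + 1)) := by ring
        rw [this]
        exact I.mul_mem_left _ h
      · right
        refine ⟨n + 1, ?_⟩
        have : (s₀ * s₁ * b) ^ (n + 1) =
            s₀ ^ (n + 1) * s₁ ^ n * (s₁ * b ^ (n + 1)) := by ring
        rw [this]
        exact I.mul_mem_left _ h
end

section
/- Let R be a commutative ring, S a multiplicatively closed subset of R, and M a finitely generated faithful multiplication R-module. If N is a weakly S-prime submodule of M and the zero ideal {0} is an S-prime ideal of R, then the radical M-rad(N) (the intersection of all prime submodules of M containing N) is an S-prime submodule of M. -/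
/-- A proper submodule `P` of an `R`-module `M` is *prime* if whenever `a • m ∈ P`,
either `a ∈ (P :_R M)` or `m ∈ P`. -/
def IsPrimeSubmodule {R M : Type*} [CommRing R] [AddCommGroup M] [Module R M]
    (P : Submodule R M) : Prop :=
  P ≠ ⊤ ∧ ∀ (a : R) (m : M), a • m ∈ P → a ∈ P.colon ⊤ ∨ m ∈ P

/-- `M`-radical of `N`: the intersection of all prime submodules of `M` containing `N`. -/
def moduleRad {R M : Type*} [CommRing R] [AddCommGroup M] [Module R M]
    (N : Submodule R M) : Submodule R M :=
  sInf {P : Submodule R M | IsPrimeSubmodule P ∧ N ≤ P}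

theorem stmt17 {R M : Type*} [CommRing R] [Nontrivial R] [AddCommGroup M] [Module R M]
    (S : Set R) (hS : ∀ a ∈ S, ∀ b ∈ S, a * b ∈ S)
    (hMfg : (⊤ : Submodule R M).FG)
    (hfaithful : ∀ r : R, (∀ m : M, r • m = 0) → r = 0)
    (hmult : ∀ P : Submodule R M, ∃ I : Ideal R, P = I • (⊤ : Submodule R M))
    (N : Submodule R M) (hN : IsWeaklySPrime S N)
    (h0 : IsSPrimeIdeal S (⊥ : Ideal R)) :
    IsSPrime S (moduleRad N) := by
  classical
  haveI : Module.Finite R M := ⟨hMfg⟩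
  obtain ⟨hdisj, s, hsS, hws⟩ := hN
  obtain ⟨-, t, htS, ht⟩ := h0
  set I : Ideal R := N.colon ⊤ with hIdef
  have hdis : ∀ x : R, x ∈ I → x ∈ S → False := fun x h1 h2 =>
    Set.eq_empty_iff_forall_notMem.mp hdisj x ⟨h1, h2⟩
  have h1notI : (1 : R) ∉ I := fun h =>
    hdis s (by simpa using I.mul_mem_left s h) hsS
  -- determinant trick
  have Lrad : ∀ (J : Ideal R) (r : R), (∀ x : M, r • x ∈ J • (⊤ : Submodule R M)) →
      r ∈ J.radical := by
    intro J r hr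
    obtain ⟨p, hmonic, -, hcoeff, heval⟩ :=
      LinearMap.exists_monic_and_coeff_mem_pow_and_aeval_eq_zero_of_range_le_smul R
        (algebraMap R (Module.End R M) r) J (by rintro x ⟨y, rfl⟩; exact hr y)
    have hev : p.eval r = 0 := by
      apply hfaithful
      intro m
      have h2 : Polynomial.aeval ((algebraMap R (Module.End R M)) r) p
          = algebraMap R (Module.End R M) (p.eval r) :=
        Polynomial.aeval_algebraMap_apply_eq_algebraMap_eval r p
      have h3 := h2.symm.trans heval
      calc p.eval r • m = (algebraMap R (Module.End R M) (p.eval r)) m := rfl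
        _ = (0 : Module.End R M) m := by rw [h3]
        _ = 0 := rfl
    refine ⟨p.natDegree, ?_⟩
    have h4 := Polynomial.eval_eq_sum_range (p := p) r
    rw [hev, Finset.sum_range_succ, hmonic.coeff_natDegree, one_mul] at h4
    have h5 : r ^ p.natDegree = -∑ i ∈ Finset.range p.natDegree, p.coeff i * r ^ i :=
      by linear_combination -h4
    rw [h5]
    refine neg_mem (Ideal.sum_mem _ fun i hi => Ideal.mul_mem_right _ _ ?_)
    exact Ideal.pow_le_self (Nat.sub_ne_zero_of_lt (Finset.mem_range.1 hi)) (hcoeff i)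
  have hpowS : ∀ x ∈ S, ∀ n : ℕ, 0 < n → x ^ n ∈ S := by
    intro x hx n hn
    induction n with
    | zero => exact absurd hn (lt_irrefl 0)
    | succ k ih =>
      rcases Nat.eq_zero_or_pos k with rfl | hk
      · simpa using hx
      · rw [pow_succ]; exact hS _ (ih hk) _ hx
  have hradS : ∀ x : R, x ∈ I.radical → x ∈ S → False := by
    rintro x ⟨n, hxn⟩ hxS
    rcases Nat.eq_zero_or_pos n with rfl | hn0
    · exact h1notI (by simpa using hxn)
    · exact hdis _ hxn (hpowS x hxS n hn0)
  have hwS : s * t ∈ S := hS s hsS t htS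
  set w := s * t with hwdef
  -- N is S-prime with witness w
  have hNsp : ∀ (a : R) (m : M), a • m ∈ N → w * a ∈ I ∨ w • m ∈ N := by
    intro a m hm
    by_cases hz : a • m = 0
    · obtain ⟨K, hK⟩ := hmult (Submodule.span R {m})
      have hak : ∀ k ∈ K, a * k = 0 := by
        intro k hk
        apply hfaithful
        intro x
        have hkx : k • x ∈ Submodule.span R {m} := by
          rw [hK]; exact Submodule.smul_mem_smul hk Submodule.mem_top
        obtain ⟨r, hr⟩ := Submodule.mem_span_singleton.1 hkx
        rw [mul_smul, ← hr, smul_smul, mul_comm a r, ← smul_smul, hz, smul_zero]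
      by_cases hta : t * a = 0
      · left
        rw [show w * a = s * (t * a) by ring, hta, mul_zero]
        exact I.zero_mem
      · right
        have htm : ∀ x, x ∈ K • (⊤ : Submodule R M) → t • x = 0 := by
          intro x hx
          refine Submodule.smul_induction_on hx (fun k hk y _ => ?_) (fun y z hy hz' => ?_)
          · have htk : t * k = 0 := by
              rcases ht a k (by rw [Ideal.mem_bot]; exact hak k hk) with h | h
              · exact absurd (by rwa [Ideal.mem_bot] at h) hta
              · rwa [Ideal.mem_bot] at h
            rw [smul_smul, htk, zero_smul]
          · rw [smul_add, hy, hz', add_zero]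
        have hmK : m ∈ K • (⊤ : Submodule R M) := hK ▸ Submodule.mem_span_singleton_self m
        have : w • m = 0 := by
          rw [show w = s * t by rfl, mul_smul, htm m hmK, smul_zero]
        rw [this]; exact N.zero_mem
    · rcases hws a m hm hz with h | h
      · left; rw [show w * a = t * (s * a) by ring]; exact I.mul_mem_left t h
      · right; rw [show w = t * s by ring, mul_smul]; exact N.smul_mem t h
  -- I is S-prime ideal with witness w
  have hIsp : ∀ a b : R, a * b ∈ I → w * a ∈ I ∨ w * b ∈ I := by
    intro a b hab
    by_cases h : w * a ∈ I
    · exact Or.inl h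
    · right
      rw [hIdef, Submodule.mem_colon]
      intro x _
      rcases hNsp a (b • x) (by rw [smul_smul]; exact Submodule.mem_colon.1 hab x trivial) with h' | h'
      · exact absurd h' h
      · rw [mul_smul]; exact h'
  -- radical of I is S-prime with witness w
  have hradsp : ∀ a b : R, a * b ∈ I.radical → w * a ∈ I.radical ∨ w * b ∈ I.radical := by
    rintro a b ⟨n, hn⟩
    rcases Nat.eq_zero_or_pos n with rfl | hn0
    · exact absurd (by simpa using hn) h1notI
    · rw [mul_pow] at hn
      have key : ∀ c : R, w * c ^ n ∈ I → w * c ∈ I.radical := by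
        intro c hc
        refine ⟨n, ?_⟩
        have h1 : (w * c) ^ n = w ^ (n - 1) * (w * c ^ n) := by
          rw [mul_pow, ← mul_assoc, ← pow_succ, Nat.sub_add_cancel hn0]
        rw [h1]; exact I.mul_mem_left _ hc
      rcases hIsp (a ^ n) (b ^ n) hn with h | h
      · exact Or.inl (key a h)
      · exact Or.inr (key b h)
  -- N = I • ⊤
  have hNI : N = I • (⊤ : Submodule R M) := by
    obtain ⟨J, hJ⟩ := hmult N
    refine le_antisymm ?_ (Submodule.smul_le.2 fun r hr x _ =>
      Submodule.mem_colon.1 hr x trivial)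
    rw [hJ]
    refine Submodule.smul_mono_left ?_
    intro j hj
    rw [hIdef, Submodule.mem_colon]
    intro x _
    rw [hJ]
    exact Submodule.smul_mem_smul hj Submodule.mem_top
  -- colon of a prime submodule is a prime ideal
  have hPcolon : ∀ P : Submodule R M, IsPrimeSubmodule P → (P.colon ⊤).IsPrime := by
    rintro P ⟨hPtop, hP⟩
    constructor
    · intro h
      have h1 : (1 : R) ∈ P.colon ⊤ := h ▸ Submodule.mem_top
      exact hPtop (Submodule.eq_top_iff'.2 fun m => by
        simpa using Submodule.mem_colon.1 h1 m trivial)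
    · intro a b hab
      by_cases ha : a ∈ P.colon ⊤
      · exact Or.inl ha
      · right
        rw [Submodule.mem_colon]
        intro x _
        rcases hP a (b • x) (by rw [smul_smul]; exact Submodule.mem_colon.1 hab x trivial) with h' | h'
        · exact absurd h' ha
        · exact h'
  -- p • ⊤ is a prime submodule for prime ideals p
  have hpM : ∀ p : Ideal R, p.IsPrime → IsPrimeSubmodule (p • (⊤ : Submodule R M)) := by
    intro p hp
    constructor
    · intro h
      have h1 : (1 : R) ∈ p.radical := Lrad p 1 fun x => by
        rw [one_smul, h]; exact Submodule.mem_top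
      rw [hp.radical] at h1
      exact hp.ne_top ((Ideal.eq_top_iff_one _).2 h1)
    · intro a m ham
      obtain ⟨K, hK⟩ := hmult (Submodule.span R {m})
      by_cases hap : a ∈ p
      · left
        rw [Submodule.mem_colon]
        intro x _
        exact Submodule.smul_mem_smul hap Submodule.mem_top
      · right
        have hKp : K ≤ p := by
          intro k hk
          have hmem : a * k ∈ p.radical := by
            refine Lrad p (a * k) fun x => ?_
            have hkx : k • x ∈ Submodule.span R {m} := by
              rw [hK]; exact Submodule.smul_mem_smul hk Submodule.mem_top
            obtain ⟨r, hr⟩ := Submodule.mem_span_singleton.1 hkx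
            have he : (a * k) • x = r • (a • m) := by
              rw [mul_smul, ← hr, smul_smul, mul_comm a r, ← smul_smul]
            rw [he]
            exact Submodule.smul_mem _ r ham
          rw [hp.radical] at hmem
          exact (hp.mem_or_mem hmem).resolve_left hap
        have hmK : m ∈ K • (⊤ : Submodule R M) := hK ▸ Submodule.mem_span_singleton_self m
        exact Submodule.smul_mono_left hKp hmK
  -- moduleRad N = I.radical • ⊤
  have hrad : moduleRad N = I.radical • (⊤ : Submodule R M) := by
    apply le_antisymm
    · obtain ⟨J, hJ⟩ := hmult (moduleRad N)
      rw [hJ]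
      refine Submodule.smul_mono_left ?_
      intro j hj
      rw [Ideal.radical_eq_sInf]
      refine Ideal.mem_sInf.2 ?_
      rintro p ⟨hIp, hp⟩
      have hle : moduleRad N ≤ p • (⊤ : Submodule R M) := by
        refine sInf_le ⟨hpM p hp, ?_⟩
        rw [hNI]
        exact Submodule.smul_mono_left hIp
      have hjx : ∀ x : M, j • x ∈ p • (⊤ : Submodule R M) := by
        intro x
        refine hle ?_
        rw [hJ]
        exact Submodule.smul_mem_smul hj Submodule.mem_top
      have := Lrad p j hjx
      rwa [hp.radical] at this
    · refine le_sInf ?_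
      rintro P ⟨hPprime, hNP⟩
      have hpc := hPcolon P hPprime
      have hIc : I ≤ P.colon ⊤ := by
        intro r hr
        rw [Submodule.mem_colon]
        intro x _
        exact hNP (Submodule.mem_colon.1 hr x trivial)
      have hrc : I.radical ≤ P.colon ⊤ := hpc.radical_le_iff.2 hIc
      calc I.radical • (⊤ : Submodule R M) ≤ (P.colon ⊤) • (⊤ : Submodule R M) :=
            Submodule.smul_mono_left hrc
        _ ≤ P := Submodule.smul_le.2 fun r hr x _ => Submodule.mem_colon.1 hr x trivial
  constructor
  · rw [Set.eq_empty_iff_forall_notMem]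
    rintro x ⟨hx1, hx2⟩
    have hx1' : x ∈ (moduleRad N).colon ⊤ := hx1
    have hxr : x ∈ I.radical.radical := by
      refine Lrad _ x fun y => ?_
      have := Submodule.mem_colon.1 hx1' y trivial
      rwa [hrad] at this
    rw [Ideal.radical_idem] at hxr
    exact hradS x hxr hx2
  · refine ⟨w, hwS, ?_⟩
    intro a m ham
    obtain ⟨K, hK⟩ := hmult (Submodule.span R {m})
    have hak : ∀ k ∈ K, a * k ∈ I.radical := by
      intro k hk
      have hall : ∀ x : M, (a * k) • x ∈ I.radical • (⊤ : Submodule R M) := by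
        intro x
        have hkx : k • x ∈ Submodule.span R {m} := by
          rw [hK]; exact Submodule.smul_mem_smul hk Submodule.mem_top
        obtain ⟨r, hr⟩ := Submodule.mem_span_singleton.1 hkx
        have he : (a * k) • x = r • (a • m) := by
          rw [mul_smul, ← hr, smul_smul, mul_comm a r, ← smul_smul]
        rw [he, ← hrad]
        exact Submodule.smul_mem _ r ham
      have := Lrad _ _ hall
      rwa [Ideal.radical_idem] at this
    by_cases hwa : w * a ∈ I.radical
    · left
      rw [Submodule.mem_colon]
      intro x _
      rw [hrad]
      exact Submodule.smul_mem_smul hwa Submodule.mem_top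
    · right
      rw [hrad]
      have hmK : m ∈ K • (⊤ : Submodule R M) := hK ▸ Submodule.mem_span_singleton_self m
      have key : ∀ x ∈ K • (⊤ : Submodule R M), w • x ∈ I.radical • (⊤ : Submodule R M) := by
        intro x hx
        refine Submodule.smul_induction_on hx (fun k hk y _ => ?_) (fun y z hy hz => ?_)
        · rw [smul_smul]
          exact Submodule.smul_mem_smul ((hradsp a k (hak k hk)).resolve_left hwa) Submodule.mem_top
        · rw [smul_add]; exact Submodule.add_mem _ hy hz
      exact key m hmK
end
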